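/- arXiv:1907.08064 — 9 statements merged into one kernel-verified Lean document; each statement's English description precedes it below -/
import Mathlib

section
/- Let k and s be positive integers, n = k + s, and fix integers 0 ≤ a_0 < a_1 < ... < a_{s-1} and 0 ≤ b_0 < b_1 < ... < b_{k-1}. Then for every subset I of the column set {0,...,n-1} with |I| = k, the determinant of the k × k submatrix of G(D) formed by the columns indexed by I is a nonzero polynomial in ℝ[D]; equivalently, every k × k submatrix of G(D) is nonsingular over the field of formal Laurent series ℝ((D)). -/
open Polynomial

/-- Every `k × k` submatrix of `G(D) = [I_k | Y(D)]`, where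
`Y(D)` has `(i,j)` entry `D^(a_j * b_i)` with `a`, `b` strictly increasing
sequences of nonnegative integers, has nonzero determinant over `ℝ[D]`. -/
theorem every_square_submatrix_of_G_nonsingular
    (k s : ℕ) (hk : 0 < k) (hs : 0 < s)
    (a : Fin s → ℕ) (b : Fin k → ℕ) (ha : StrictMono a) (hb : StrictMono b)
    (G : Matrix (Fin k) (Fin (k + s)) (Polynomial ℝ))
    (hG : ∀ (i : Fin k) (j : Fin (k + s)),
      G i j = if hj : (j : ℕ) < k
        then (if (j : ℕ) = (i : ℕ) then 1 else 0)
        else X ^ (a ⟨(j : ℕ) - k, by have := j.isLt; omega⟩ * b i)) :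
    ∀ (I : Finset (Fin (k + s))) (hI : I.card = k),
      (G.submatrix id (I.orderEmbOfFin hI)).det ≠ 0 := by
  intro I hI
  classical
  set f : Fin k → Fin (k + s) := fun c => I.orderEmbOfFin hI c with hfdef
  have hfmono : StrictMono f := (I.orderEmbOfFin hI).strictMono
  have hfinj : Function.Injective f := hfmono.injective
  have hltk : ∀ c : Fin k, (f c : ℕ) - k < s := fun c => by have := (f c).isLt; omega
  set A : Fin k → ℕ :=
    fun c => if h : (f c : ℕ) < k then 0 else a ⟨(f c : ℕ) - k, hltk c⟩ with hAdef
  -- A is strictly monotone on the "Y-part" columns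
  have hAmono : ∀ c c' : Fin k, ¬ ((f c : ℕ) < k) → ¬ ((f c' : ℕ) < k) → c < c' →
      A c < A c' := by
    intro c c' hc hc' hcc
    have hff : (f c : ℕ) < (f c' : ℕ) := hfmono hcc
    have : (⟨(f c : ℕ) - k, hltk c⟩ : Fin s) < ⟨(f c' : ℕ) - k, hltk c'⟩ := by
      simp only [Fin.mk_lt_mk]; omega
    simpa only [hAdef, dif_neg hc, dif_neg hc'] using ha this
  -- the entry formula
  have hentry : ∀ (r c : Fin k), G r (f c)
      = if (f c : ℕ) < k ∧ (f c : ℕ) ≠ (r : ℕ) then 0 else X ^ (A c * b r) := by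
    intro r c
    rw [hG]
    by_cases h : (f c : ℕ) < k
    · by_cases h2 : (f c : ℕ) = (r : ℕ) <;>
        simp [h, h2, hAdef]
    · simp [h, hAdef]
  set P : Equiv.Perm (Fin k) → Prop :=
    fun σ => ∀ c : Fin k, (f c : ℕ) < k → ((σ c : ℕ) = (f c : ℕ)) with hPdef
  set W : Equiv.Perm (Fin k) → ℕ := fun σ => ∑ c, A c * b (σ c) with hWdef
  have hprod : ∀ σ : Equiv.Perm (Fin k),
      (∏ c, G (σ c) (f c)) = if P σ then X ^ W σ else 0 := by
    intro σ
    by_cases hp : P σ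
    · rw [if_pos hp, hWdef, ← Finset.prod_pow_eq_pow_sum]
      refine Finset.prod_congr rfl fun c _ => ?_
      rw [hentry, if_neg]
      rintro ⟨h1, h2⟩
      exact h2 (hp c h1).symm
    · rw [if_neg hp]
      simp only [hPdef] at hp
      push_neg at hp
      obtain ⟨c, hc1, hc2⟩ := hp
      refine Finset.prod_eq_zero (Finset.mem_univ c) ?_
      rw [hentry, if_pos ⟨hc1, fun h => hc2 h.symm⟩]
  -- the set of permutations with nonzero term
  set S : Finset (Equiv.Perm (Fin k)) := Finset.univ.filter P with hSdef
  -- S is nonempty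
  have hSne : S.Nonempty := by
    set C0 : Finset (Fin k) := Finset.univ.filter (fun c => (f c : ℕ) < k) with hC0def
    set u0 : Fin k → Fin k :=
      fun c => if h : (f c : ℕ) < k then ⟨(f c : ℕ), h⟩ else ⟨0, hk⟩ with hu0def
    set T : Finset (Fin k) := C0.image u0 with hTdef
    have hmC1 : ∀ c : Fin k, ¬ ((f c : ℕ) < k) → c ∈ C0ᶜ := by
      intro c h
      simp only [hC0def, Finset.mem_compl, Finset.mem_filter, Finset.mem_univ, true_and]
      exact h
    have hcardT : T.card = C0.card := by
      refine Finset.card_image_of_injOn ?_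
      intro c hc c' hc' he
      have hc2 : (f c : ℕ) < k := (Finset.mem_filter.mp hc).2
      have hc'2 : (f c' : ℕ) < k := (Finset.mem_filter.mp hc').2
      simp only [hu0def, dif_pos hc2, dif_pos hc'2, Fin.mk.injEq] at he
      exact hfinj (Fin.ext he)
    have hcards : Fintype.card (↥(C0ᶜ)) = Fintype.card (↥(Tᶜ)) := by
      simp only [Fintype.card_coe, Finset.card_compl, hcardT]
    let e : ↥(C0ᶜ) ≃ ↥(Tᶜ) := Fintype.equivOfCardEq hcards
    set g : Fin k → Fin k := fun c =>
      if h : (f c : ℕ) < k then ⟨(f c : ℕ), h⟩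
      else (e ⟨c, hmC1 c h⟩ : Fin k) with hgdef
    have hginj : Function.Injective g := by
      intro c c' he
      by_cases h : (f c : ℕ) < k <;> by_cases h' : (f c' : ℕ) < k
      · simp only [hgdef, dif_pos h, dif_pos h', Fin.mk.injEq] at he
        exact hfinj (Fin.ext he)
      · exfalso
        simp only [hgdef, dif_pos h, dif_neg h'] at he
        have hmem : (⟨(f c : ℕ), h⟩ : Fin k) ∈ T := by
          refine Finset.mem_image.mpr ⟨c, ?_, by simp [hu0def, h]⟩
          simp [hC0def, h]
        rw [he] at hmem
        have := (e ⟨c', hmC1 c' h'⟩).2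
        rw [Finset.mem_compl] at this
        exact this hmem
      · exfalso
        simp only [hgdef, dif_neg h, dif_pos h'] at he
        have hmem : (⟨(f c' : ℕ), h'⟩ : Fin k) ∈ T := by
          refine Finset.mem_image.mpr ⟨c', ?_, by simp [hu0def, h']⟩
          simp [hC0def, h']
        rw [← he] at hmem
        have := (e ⟨c, hmC1 c h⟩).2
        rw [Finset.mem_compl] at this
        exact this hmem
      · simp only [hgdef, dif_neg h, dif_neg h'] at he
        have := e.injective (Subtype.coe_injective he)
        exact Subtype.mk_eq_mk.mp this
    set σ0 : Equiv.Perm (Fin k) :=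
      Equiv.ofBijective g (Finite.injective_iff_bijective.mp hginj) with hσ0def
    refine ⟨σ0, ?_⟩
    simp only [hSdef, Finset.mem_filter, Finset.mem_univ, true_and, hPdef]
    intro c hc
    show (g c : ℕ) = (f c : ℕ)
    simp [hgdef, hc]
  -- pick a maximizer of W on S
  obtain ⟨σm, hσmS, hmax⟩ := Finset.exists_max_image S W hSne
  have hPσm : P σm := by
    simpa only [hSdef, Finset.mem_filter, Finset.mem_univ, true_and] using hσmS
  -- L1: any maximizer is order preserving on the Y-columns
  have hL1 : ∀ σ, P σ → (∀ τ ∈ S, W τ ≤ W σ) → ∀ c c' : Fin k,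
      ¬ ((f c : ℕ) < k) → ¬ ((f c' : ℕ) < k) → c < c' → σ c < σ c' := by
    intro σ hσ hmax' c c' hc hc' hcc
    rcases lt_trichotomy (σ c) (σ c') with h | h | h
    · exact h
    · exact absurd (σ.injective h) (ne_of_lt hcc)
    · exfalso
      set σ' : Equiv.Perm (Fin k) := σ * Equiv.swap c c' with hσ'def
      have hcne : c ≠ c' := ne_of_lt hcc
      have hσ'P : P σ' := by
        intro d hd
        have hdc : d ≠ c := fun hh => hc (hh ▸ hd)
        have hdc' : d ≠ c' := fun hh => hc' (hh ▸ hd)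
        have : σ' d = σ d := by
          simp [hσ'def, Equiv.Perm.mul_apply, Equiv.swap_apply_of_ne_of_ne hdc hdc']
        rw [this]
        exact hσ d hd
      have hσ'S : σ' ∈ S := by
        simp only [hSdef, Finset.mem_filter, Finset.mem_univ, true_and]; exact hσ'P
      have hkey : ∀ τ : Equiv.Perm (Fin k),
          W τ = (∑ d ∈ ({c, c'} : Finset (Fin k))ᶜ, A d * b (τ d))
            + (A c * b (τ c) + A c' * b (τ c')) := by
        intro τ
        show (∑ d : Fin k, A d * b (τ d)) = _
        rw [← Finset.sum_compl_add_sum ({c, c'} : Finset (Fin k)) (fun d => A d * b (τ d))]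
        congr 1
        exact Finset.sum_pair hcne
      have hWlt : W σ < W σ' := by
        rw [hkey σ, hkey σ']
        have hrest : (∑ d ∈ ({c, c'} : Finset (Fin k))ᶜ, A d * b (σ d))
            = ∑ d ∈ ({c, c'} : Finset (Fin k))ᶜ, A d * b (σ' d) := by
          refine Finset.sum_congr rfl fun d hd => ?_
          rw [Finset.mem_compl, Finset.mem_insert, Finset.mem_singleton] at hd
          push_neg at hd
          simp [hσ'def, Equiv.Perm.mul_apply,
            Equiv.swap_apply_of_ne_of_ne hd.1 hd.2]
        rw [← hrest]
        have h1 : σ' c = σ c' := by simp [hσ'def, Equiv.Perm.mul_apply]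
        have h2 : σ' c' = σ c := by simp [hσ'def, Equiv.Perm.mul_apply]
        rw [h1, h2]
        have hA : A c < A c' := hAmono c c' hc hc' hcc
        have hbb : b (σ c') < b (σ c) := hb h
        have : A c * b (σ c) + A c' * b (σ c') < A c * b (σ c') + A c' * b (σ c) := by
          nlinarith
        omega
      exact absurd (hmax' σ' hσ'S) (not_le.mpr hWlt)
  -- uniqueness of the maximizer
  have huniq : ∀ σ, P σ → W σ = W σm → σ = σm := by
    intro σ hσP hWeq
    have hmaxσ : ∀ τ ∈ S, W τ ≤ W σ := fun τ ht => hWeq ▸ hmax τ ht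
    set π : Equiv.Perm (Fin k) := σm⁻¹ * σ with hπdef
    have hπC0 : ∀ d : Fin k, (f d : ℕ) < k → π d = d := by
      intro d hd
      have h1 : σ d = σm d := Fin.ext ((hσP d hd).trans (hPσm d hd).symm)
      simp [hπdef, Equiv.Perm.mul_apply, h1]
    have hπC1 : ∀ d : Fin k, ¬ ((f d : ℕ) < k) → ¬ ((f (π d) : ℕ) < k) := by
      intro d hd hcon
      have h1 : π (π d) = π d := hπC0 (π d) hcon
      have h2 : π d = d := π.injective h1
      exact hd (h2 ▸ hcon)
    have hπmono : ∀ c c' : Fin k, ¬ ((f c : ℕ) < k) → ¬ ((f c' : ℕ) < k) → c < c' →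
        π c < π c' := by
      intro c c' hc hc' hcc
      have h1 : σ c < σ c' := hL1 σ hσP hmaxσ c c' hc hc' hcc
      rcases lt_trichotomy (π c) (π c') with h | h | h
      · exact h
      · exact absurd (π.injective h) (ne_of_lt hcc)
      · exfalso
        have h2 : σm (π c') < σm (π c) :=
          hL1 σm hPσm hmax (π c') (π c) (hπC1 c' hc') (hπC1 c hc) h
        have e1 : σm (π c) = σ c := by simp [hπdef, Equiv.Perm.mul_apply]
        have e2 : σm (π c') = σ c' := by simp [hπdef, Equiv.Perm.mul_apply]
        rw [e1, e2] at h2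
        exact absurd h2 (not_lt.mpr h1.le)
    have hπid : ∀ d, π d = d := by
      by_contra hbad
      push_neg at hbad
      obtain ⟨d0, hd0⟩ := hbad
      set Bad : Finset (Fin k) := Finset.univ.filter (fun d => π d ≠ d) with hBaddef
      have hne : Bad.Nonempty := ⟨d0, by simp [hBaddef, hd0]⟩
      set c := Bad.min' hne with hcdef
      have hcBad : π c ≠ c := by
        have := Bad.min'_mem hne
        simpa [hBaddef] using this
      have hgood : ∀ d, d < c → π d = d := by
        intro d hd
        by_contra hdd
        exact absurd (Bad.min'_le d (by simp [hBaddef, hdd])) (not_le.mpr hd)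
      have hcC1 : ¬ ((f c : ℕ) < k) := fun h => hcBad (hπC0 c h)
      rcases lt_trichotomy (π c) c with h | h | h
      · exact hcBad (π.injective (hgood (π c) h))
      · exact hcBad h
      · have hd1 : π (π⁻¹ c) = c := π.apply_symm_apply c
        have hdne : π⁻¹ c ≠ c := by
          intro hh
          exact hcBad (by rw [← hh, hd1, hh])
        rcases lt_trichotomy (π⁻¹ c) c with h2 | h2 | h2
        · exact hdne ((hgood _ h2).symm.trans hd1)
        · exact hdne h2
        · have hd1C1 : ¬ ((f (π⁻¹ c) : ℕ) < k) := by
            intro hh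
            have := hπC0 _ hh
            rw [hd1] at this
            exact hdne this.symm
          have h3 : π c < π (π⁻¹ c) := hπmono c (π⁻¹ c) hcC1 hd1C1 h2
          rw [hd1] at h3
          exact absurd h3 (not_lt.mpr h.le)
    have hπ1 : σm⁻¹ * σ = 1 := Equiv.ext hπid
    exact (inv_mul_eq_one.mp hπ1).symm
  -- determinant as a sum of monomials
  have hdet : (G.submatrix id (I.orderEmbOfFin hI)).det
      = ∑ σ : Equiv.Perm (Fin k),
          Equiv.Perm.sign σ • (if P σ then X ^ W σ else 0) := by
    rw [Matrix.det_apply]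
    refine Finset.sum_congr rfl fun σ _ => ?_
    congr 1
    rw [← hprod σ]
    refine Finset.prod_congr rfl fun c _ => ?_
    simp [Matrix.submatrix_apply, hfdef]
  -- the coefficient at N = W σm is ± 1
  have hcoeff : ((G.submatrix id (I.orderEmbOfFin hI)).det).coeff (W σm)
      = (((Equiv.Perm.sign σm : ℤ) : ℝ)) := by
    rw [hdet, Polynomial.finset_sum_coeff]
    rw [Finset.sum_eq_single σm]
    · rw [if_pos hPσm, Units.smul_def, Polynomial.coeff_smul, Polynomial.coeff_X_pow,
        if_pos rfl]
      simp
    · intro σ _ hne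
      by_cases hp : P σ
      · rw [if_pos hp, Units.smul_def, Polynomial.coeff_smul, Polynomial.coeff_X_pow,
          if_neg, smul_zero]
        intro hNW
        exact hne (huniq σ hp hNW.symm)
      · rw [if_neg hp]
        simp
    · intro habs
      exact absurd (Finset.mem_univ σm) habs
  intro h0
  rw [h0, Polynomial.coeff_zero] at hcoeff
  have : ((Equiv.Perm.sign σm : ℤ) : ℝ) ≠ 0 := by
    exact_mod_cast Int.cast_ne_zero.mpr (Units.ne_zero _)
  exact this hcoeff.symm
end

section
/- Let k and s be positive integers and n = k + s. Let G_mv(D) = [I_k | Y_{k,s}(D)] be the k × n matrix over ℝ[D] whose first k columns form the identity and whose (i, k+j) entry is D^{i·j} for 0 ≤ i ≤ k-1, 0 ≤ j ≤ s-1. Then every k × k submatrix of G_mv(D) has determinant a nonzero polynomial in D, i.e., is nonsingular. -/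
open Polynomial Finset Equiv

/-- There is a permutation `τ` compatible with the identity columns that uniquely
maximizes the weight `∑ c, τ c * (f c - k)` among all compatible permutations. -/
lemma exists_max_perm (k s : ℕ) (I : Finset (Fin (k + s))) (hI : I.card = k) :
    ∃ τ : Equiv.Perm (Fin k),
      (∀ c, ((I.orderEmbOfFin hI c : ℕ) < k) → (τ c : ℕ) = (I.orderEmbOfFin hI c : ℕ)) ∧
      ∀ σ : Equiv.Perm (Fin k),
        (∀ c, ((I.orderEmbOfFin hI c : ℕ) < k) → (σ c : ℕ) = (I.orderEmbOfFin hI c : ℕ)) →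
        σ ≠ τ →
        ∑ c, (σ c : ℕ) * ((I.orderEmbOfFin hI c : ℕ) - k) <
        ∑ c, (τ c : ℕ) * ((I.orderEmbOfFin hI c : ℕ) - k) := by
  classical
  set f : Fin k → Fin (k + s) := fun c => I.orderEmbOfFin hI c with hfdef
  set g : Fin k → ℕ := fun c => (f c : ℕ) - k with hgdef
  set A : Finset (Fin k) := univ.filter (fun c => (f c : ℕ) < k) with hAdef
  set B : Finset (Fin k) := Aᶜ with hBdef
  set T : Finset (Fin k) := univ.filter
    (fun r => (Fin.castLE (Nat.le_add_right k s) r) ∈ I) with hTdef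
  set R : Finset (Fin k) := Tᶜ with hRdef
  have hfI : ∀ c, f c ∈ I := fun c => I.orderEmbOfFin_mem hI c
  have hfinj : Function.Injective f := (I.orderEmbOfFin hI).injective
  have hfmono : StrictMono f := (I.orderEmbOfFin hI).strictMono
  have hmemB : ∀ c : Fin k, c ∈ B ↔ ¬ (f c : ℕ) < k := by
    intro c; simp [hBdef, hAdef]
  have hmemT : ∀ r : Fin k, r ∈ T ↔ (Fin.castLE (Nat.le_add_right k s) r) ∈ I := by
    intro r; simp [hTdef]
  -- every element of `I` is in the range of `f`
  have hrange : ∀ x ∈ I, ∃ c, f c = x := by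
    intro x hx
    have := I.range_orderEmbOfFin hI
    have hx' : x ∈ Set.range (I.orderEmbOfFin hI) := by rw [this]; exact_mod_cast hx
    obtain ⟨c, hc⟩ := hx'
    exact ⟨c, hc⟩
  have hAT : A.card = T.card := by
    apply card_bij (fun (a : Fin k) (ha : a ∈ A) => (⟨(f a : ℕ), (mem_filter.mp ha).2⟩ : Fin k))
    · intro a ha
      rw [hmemT]
      have : (Fin.castLE (Nat.le_add_right k s) (⟨(f a : ℕ), (mem_filter.mp ha).2⟩ : Fin k)) = f a := by
        apply Fin.ext; rfl
      rw [this]; exact hfI a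
    · intro a ha a' ha' h
      have h2 := congrArg Fin.val h
      exact hfinj (Fin.ext h2)
    · intro r hr
      obtain ⟨c, hc⟩ := hrange _ ((hmemT r).mp hr)
      have hck : (f c : ℕ) < k := by rw [hc]; exact r.isLt
      refine ⟨c, mem_filter.mpr ⟨mem_univ _, hck⟩, ?_⟩
      apply Fin.ext
      simp [hc]
  have hR : R.card = B.card := by
    rw [hRdef, hBdef, card_compl, card_compl, hAT]
  -- the candidate permutation
  set u : Fin k → Fin k := fun c =>
    if h : (f c : ℕ) < k then ⟨(f c : ℕ), h⟩
    else R.orderEmbOfFin hR ((B.orderIsoOfFin rfl).symm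
      ⟨c, by rw [hmemB]; exact h⟩) with hudef
  have huA : ∀ c, (f c : ℕ) < k → (u c : ℕ) = (f c : ℕ) := by
    intro c h; simp [hudef, dif_pos h]
  have huT : ∀ c, (f c : ℕ) < k → u c ∈ T := by
    intro c h
    rw [hmemT]
    have : (Fin.castLE (Nat.le_add_right k s) (u c)) = f c := by
      apply Fin.ext; simp [huA c h]
    rw [this]; exact hfI c
  have huR : ∀ c, c ∈ B → u c ∈ R := by
    intro c hc
    have h : ¬ (f c : ℕ) < k := (hmemB c).mp hc
    simp only [hudef, dif_neg h]
    exact R.orderEmbOfFin_mem hR _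
  have huBmono : ∀ c ∈ B, ∀ c' ∈ B, c < c' → u c < u c' := by
    intro c hc c' hc' hlt
    have h : ¬ (f c : ℕ) < k := (hmemB c).mp hc
    have h' : ¬ (f c' : ℕ) < k := (hmemB c').mp hc'
    simp only [hudef, dif_neg h, dif_neg h']
    apply (R.orderEmbOfFin hR).strictMono
    apply (B.orderIsoOfFin rfl).symm.strictMono
    exact hlt
  have huinj : Function.Injective u := by
    intro c c' h
    by_cases hck : (f c : ℕ) < k <;> by_cases hck' : (f c' : ℕ) < k
    · apply hfinj; apply Fin.ext
      rw [← huA c hck, ← huA c' hck', h]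
    · exfalso
      have h1 : u c ∈ T := huT c hck
      have h2 : u c' ∈ R := huR c' ((hmemB c').mpr hck')
      rw [h] at h1
      exact (mem_compl.mp h2) h1
    · exfalso
      have h1 : u c' ∈ T := huT c' hck'
      have h2 : u c ∈ R := huR c ((hmemB c).mpr hck)
      rw [← h] at h1
      exact (mem_compl.mp h2) h1
    · have hc : c ∈ B := (hmemB c).mpr hck
      have hc' : c' ∈ B := (hmemB c').mpr hck'
      simp only [hudef, dif_neg hck, dif_neg hck'] at h
      have := (R.orderEmbOfFin hR).injective h
      have := (B.orderIsoOfFin rfl).symm.injective this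
      simpa using congrArg Subtype.val this
  have hubij : Function.Bijective u := Finite.injective_iff_bijective.mp huinj
  refine ⟨Equiv.ofBijective u hubij, ?_, ?_⟩
  · intro c hck
    exact huA c hck
  intro σ hadm hne
  have hadm' : ∀ c, (f c : ℕ) < k → (σ c : ℕ) = (f c : ℕ) := hadm
  set τ : Equiv.Perm (Fin k) := Equiv.ofBijective u hubij with hτdef
  have hτapp : ∀ c, τ c = u c := fun c => rfl
  -- σ and τ agree on A
  have hagreeA : ∀ c ∈ A, σ c = τ c := by
    intro c hc
    have hck : (f c : ℕ) < k := (mem_filter.mp hc).2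
    apply Fin.ext
    rw [hadm c hck, hτapp, huA c hck]
  set π : Equiv.Perm (Fin k) := τ⁻¹ * σ with hπdef
  have hστ : ∀ c, σ c = τ (π c) := by
    intro c; simp [hπdef]
  have hsupp : {x | π x ≠ x} ⊆ ↑B := by
    intro x hx
    simp only [Set.mem_setOf_eq] at hx
    by_contra hxB
    have hxA : x ∈ A := by
      by_contra h
      exact hxB (Finset.mem_coe.mpr (mem_compl.mpr h))
    apply hx
    show (τ⁻¹ * σ) x = x
    rw [Equiv.Perm.mul_apply, hagreeA x hxA]
    simp
  -- reduce sums to B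
  have hgA : ∀ c, c ∉ B → g c = 0 := by
    intro c hc
    have hck : (f c : ℕ) < k := by
      by_contra h
      exact hc ((hmemB c).mpr h)
    exact Nat.sub_eq_zero_of_le (le_of_lt hck)
  have hsum : ∀ ρ : Equiv.Perm (Fin k),
      ∑ c, (ρ c : ℕ) * g c = ∑ c ∈ B, (ρ c : ℕ) * g c := by
    intro ρ
    symm
    apply Finset.sum_subset (subset_univ B)
    intro c _ hc
    rw [hgA c hc, mul_zero]
  -- strict monotonicity facts on B
  have hgBmono : ∀ c ∈ B, ∀ c' ∈ B, c < c' → g c < g c' := by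
    intro c hc c' hc' hlt
    have h : ¬ (f c : ℕ) < k := (hmemB c).mp hc
    exact Nat.sub_lt_sub_right (le_of_not_gt h) (hfmono hlt)
  have hfg : MonovaryOn (fun c => (τ c : ℕ)) g B := by
    intro c hc c' hc' hglt
    have hlt : c < c' := by
      rcases lt_trichotomy c c' with h | h | h
      · exact h
      · exact absurd (h ▸ rfl) (ne_of_lt hglt)
      · exact absurd (hgBmono c' hc' c hc h) (not_lt_of_gt hglt)
    exact le_of_lt (by exact_mod_cast huBmono c hc c' hc' hlt)
  have key := hfg.sum_comp_perm_mul_lt_sum_mul_iff hsupp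
  -- σ maps B into R
  have hσR : ∀ c ∈ B, σ c ∈ R := by
    intro c hc
    rw [hRdef, mem_compl]
    intro hT
    obtain ⟨c'', hc''⟩ := hrange _ ((hmemT _).mp hT)
    have hk'' : (f c'' : ℕ) < k := by
      rw [hc'']; simp
    have : (σ c'' : ℕ) = (σ c : ℕ) := by
      rw [hadm' c'' hk'']; simp [hc'']
    have : c'' = c := σ.injective (Fin.ext this)
    rw [this] at hk''
    exact (hmemB c).mp hc hk''
  have hτR : ∀ c ∈ B, τ c ∈ R := fun c hc => huR c hc
  -- main strict inequality
  show ∑ c, (σ c : ℕ) * g c < ∑ c, (τ c : ℕ) * g c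
  rw [hsum σ, hsum τ]
  have hcomp : ∀ c, ((fun c => (τ c : ℕ)) ∘ π) c = (σ c : ℕ) := by
    intro c; simp [Function.comp, ← hστ c]
  have hsum2 : ∑ c ∈ B, (σ c : ℕ) * g c = ∑ c ∈ B, (τ (π c) : ℕ) * g c := by
    apply Finset.sum_congr rfl
    intro c _; rw [← hστ c]
  rw [hsum2]
  rw [key]
  -- it remains to show ¬ MonovaryOn (τ ∘ π) g B
  intro hmono
  apply hne
  -- σ is strictly monotone on B
  have hσBmono : ∀ c ∈ B, ∀ c' ∈ B, c < c' → σ c < σ c' := by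
    intro c hc c' hc' hlt
    have hle : (τ (π c) : ℕ) ≤ (τ (π c') : ℕ) := hmono hc hc' (hgBmono c hc c' hc' hlt)
    have hle' : (σ c : ℕ) ≤ (σ c' : ℕ) := by rwa [← hστ c, ← hστ c'] at hle
    have hne' : σ c ≠ σ c' := fun h => (ne_of_lt hlt) (σ.injective h)
    exact lt_of_le_of_ne (by exact_mod_cast hle') hne'
  -- compare with the unique order embedding of R
  have hBcard : B.card = B.card := rfl
  set e : Fin B.card ≃o B := B.orderIsoOfFin rfl with hedef
  have heB : ∀ i, (e i : Fin k) ∈ B := fun i => (e i).2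
  have hF : ∀ (ρ : Equiv.Perm (Fin k)), (∀ c ∈ B, ∀ c' ∈ B, c < c' → ρ c < ρ c') →
      (∀ c ∈ B, ρ c ∈ R) → (fun i => ρ (e i)) = R.orderEmbOfFin hR := by
    intro ρ hmon hmem
    apply Finset.orderEmbOfFin_unique
    · intro i; exact hmem _ (heB i)
    · intro i j hij
      exact hmon _ (heB i) _ (heB j) (by exact_mod_cast e.strictMono hij)
  have h1 := hF σ hσBmono hσR
  have h2 := hF τ (fun c hc c' hc' h => by rw [hτapp, hτapp]; exact huBmono c hc c' hc' h) hτR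
  have hagreeB : ∀ c ∈ B, σ c = τ c := by
    intro c hc
    have : c = ((e (e.symm ⟨c, hc⟩)) : Fin k) := by simp
    rw [this]
    have := congrFun (h1.trans h2.symm) (e.symm ⟨c, hc⟩)
    exact this
  apply Equiv.ext
  intro c
  by_cases hc : c ∈ A
  · exact hagreeA c hc
  · exact hagreeB c ((hmemB c).mpr (by simpa [hAdef] using hc))
/-- Every `k × k` submatrix of `G_mv(D) = [I_k | Y_{k,s}(D)]`, where
`Y_{k,s}(D)` has `(i,j)` entry `D^(i*j)`, has determinant a nonzero polynomial. -/
theorem every_square_submatrix_of_Gmv_nonsingular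
    (k s : ℕ) (hk : 0 < k) (hs : 0 < s)
    (G : Matrix (Fin k) (Fin (k + s)) (Polynomial ℝ))
    (hG : ∀ (i : Fin k) (j : Fin (k + s)),
      G i j = if (j : ℕ) < k
        then (if (j : ℕ) = (i : ℕ) then 1 else 0)
        else X ^ ((i : ℕ) * ((j : ℕ) - k))) :
    ∀ (I : Finset (Fin (k + s))) (hI : I.card = k),
      (G.submatrix id (I.orderEmbOfFin hI)).det ≠ 0 := by
  classical
  intro I hI
  obtain ⟨τ, hτadm, hτmax⟩ := exists_max_perm k s I hI
  set f : Fin k → Fin (k + s) := fun c => I.orderEmbOfFin hI c with hfdef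
  set g : Fin k → ℕ := fun c => (f c : ℕ) - k with hgdef
  set M : Matrix (Fin k) (Fin k) (Polynomial ℝ) :=
    G.submatrix id (I.orderEmbOfFin hI) with hMdef
  set N : ℕ := ∑ c, (τ c : ℕ) * g c with hNdef
  -- the product associated with an admissible permutation
  have hprod : ∀ σ : Equiv.Perm (Fin k),
      (∀ c, (f c : ℕ) < k → (σ c : ℕ) = (f c : ℕ)) →
      (∏ c, M (σ c) c) = X ^ (∑ c, (σ c : ℕ) * g c) := by
    intro σ hadm
    rw [← Finset.prod_pow_eq_pow_sum]
    apply Finset.prod_congr rfl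
    intro c _
    have : M (σ c) c = G (σ c) (f c) := rfl
    rw [this, hG]
    by_cases h : (f c : ℕ) < k
    · have hg0 : g c = 0 := Nat.sub_eq_zero_of_le (le_of_lt h)
      rw [if_pos h, if_pos (hadm c h).symm, hg0]
      simp
    · rw [if_neg h]
  have hprod0 : ∀ σ : Equiv.Perm (Fin k),
      ¬ (∀ c, (f c : ℕ) < k → (σ c : ℕ) = (f c : ℕ)) →
      (∏ c, M (σ c) c) = 0 := by
    intro σ hadm
    push_neg at hadm
    obtain ⟨c0, hc0k, hc0⟩ := hadm
    apply Finset.prod_eq_zero (Finset.mem_univ c0)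
    have : M (σ c0) c0 = G (σ c0) (f c0) := rfl
    rw [this, hG, if_pos hc0k, if_neg (fun h => hc0 h.symm)]
  -- the coefficient of the determinant at degree N
  have hcoeff : (M.det).coeff N = (Equiv.Perm.sign τ : ℤ) • (1 : ℝ) := by
    rw [Matrix.det_apply, Polynomial.finset_sum_coeff]
    rw [Finset.sum_eq_single_of_mem τ (Finset.mem_univ τ)]
    · rw [Polynomial.coeff_smul, hprod τ hτadm, ← hNdef, Polynomial.coeff_X_pow, if_pos rfl]
      simp [Units.smul_def]
    · intro σ _ hσne
      by_cases hadm : ∀ c, (f c : ℕ) < k → (σ c : ℕ) = (f c : ℕ)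
      · rw [Polynomial.coeff_smul, hprod σ hadm, Polynomial.coeff_X_pow,
          if_neg (Nat.ne_of_gt (hτmax σ hadm hσne)), smul_zero]
      · rw [Polynomial.coeff_smul, hprod0 σ hadm, Polynomial.coeff_zero, smul_zero]
  intro hdet
  rw [hdet, Polynomial.coeff_zero] at hcoeff
  rcases Int.units_eq_one_or (Equiv.Perm.sign τ) with h | h <;>
    rw [h] at hcoeff <;> norm_num at hcoeff
end

section
/- Let v be a positive integer and fix integers 0 ≤ a_0 < a_1 < ... < a_{v-1} and 0 ≤ b_0 < b_1 < ... < b_{v-1}. Let X(D) be the v × v matrix over ℝ[D] whose (i,j) entry is D^{a_j · b_i}. Then det X(D) is a nonzero polynomial in ℝ[D]. -/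
open Polynomial

/-- The `v × v` matrix over `ℝ[D]` with `(i,j)` entry `D^(a_j * b_i)`,
for strictly increasing sequences `a`, `b` of nonnegative integers, has nonzero
determinant. -/
theorem det_exponent_matrix_ne_zero
    (v : ℕ) (hv : 0 < v)
    (a b : Fin v → ℕ) (ha : StrictMono a) (hb : StrictMono b) :
    Matrix.det (Matrix.of fun i j : Fin v => (X : Polynomial ℝ) ^ (a j * b i)) ≠ 0 := by
  set N : ℕ := ∑ i, a i * b i with hN
  have hmono : Monovary a b := fun i j h => (ha.le_iff_le.2 (hb.lt_iff_lt.1 h).le)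
  -- strict rearrangement: for σ ≠ 1 the exponent is strictly less
  have key : ∀ σ : Equiv.Perm (Fin v), σ ≠ 1 → (∑ i, a i * b (σ i)) < N := by
    intro σ hσ
    rw [hN]
    rw [hmono.sum_mul_comp_perm_lt_sum_mul_iff]
    intro hmv
    apply hσ
    have hsm : StrictMono σ := by
      intro i j hij
      rcases lt_trichotomy (σ i) (σ j) with h | h | h
      · exact h
      · exact absurd (σ.injective h) hij.ne
      · have := hmv (show (b ∘ σ) j < (b ∘ σ) i from hb h)
        exact absurd (ha.le_iff_le.1 this) (not_le.2 hij)
    have hrange : Set.range (σ : Fin v → Fin v) = Set.range (id : Fin v → Fin v) := by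
      rw [Set.range_id, Set.range_eq_univ.2 σ.surjective]
    have : (σ : Fin v → Fin v) = id := (@StrictMono.range_inj (Fin v) (Fin v) _ _ (inferInstanceAs (WellFoundedLT (Fin v))) _ _ hsm strictMono_id).1 hrange
    exact Equiv.ext fun i => congrFun this i
  have hcoeff : (Matrix.det (Matrix.of fun i j : Fin v =>
      (X : Polynomial ℝ) ^ (a j * b i))).coeff N = 1 := by
    rw [Matrix.det_apply]
    rw [Polynomial.finset_sum_coeff]
    rw [Finset.sum_eq_single (1 : Equiv.Perm (Fin v))]
    · rw [Polynomial.coeff_smul]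
      have : (∏ i, ((Matrix.of fun i j : Fin v => (X : Polynomial ℝ) ^ (a j * b i))) ((1 : Equiv.Perm (Fin v)) i) i)
          = X ^ N := by
        simp only [Matrix.of_apply, Equiv.Perm.one_apply, ← Finset.prod_pow_eq_pow_sum, hN]
      rw [this, coeff_X_pow, if_pos rfl]
      simp
    · intro σ _ hσ
      rw [Polynomial.coeff_smul]
      have : (∏ i, ((Matrix.of fun i j : Fin v => (X : Polynomial ℝ) ^ (a j * b i))) (σ i) i)
          = X ^ (∑ i, a i * b (σ i)) := by
        simp only [Matrix.of_apply, ← Finset.prod_pow_eq_pow_sum]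
      rw [this, coeff_X_pow, if_neg (by exact fun h => absurd (h ▸ key σ hσ) (lt_irrefl N)), smul_zero]
    · intro h
      exact absurd (Finset.mem_univ _) h
  intro h
  rw [h] at hcoeff
  simp at hcoeff
end

section
/- Let v be a positive integer and fix integers 0 ≤ a_0 < a_1 < ... < a_{v-1} and 0 ≤ b_0 < b_1 < ... < b_{v-1}. For a real v × v matrix R, let R ∘ X(D) be the v × v matrix over ℝ[D] whose (i,j) entry is R_{i,j} · D^{a_j · b_i}. Then for Lebesgue-almost-every R ∈ ℝ^{v×v}, det(R ∘ X(D)) is a nonzero polynomial in ℝ[D]. -/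
open Polynomial MeasureTheory

/-- A strictly monotone permutation of `Fin v` is the identity. -/
lemma perm_eq_one_of_strictMono {v : ℕ} (σ : Equiv.Perm (Fin v))
    (h : StrictMono σ) : σ = 1 := by
  have e : Fin v ≃o Fin v := StrictMono.orderIsoOfSurjective σ h σ.surjective
  refine Equiv.ext fun i => ?_
  have := congrArg (fun f : Fin v ≃o Fin v => f i)
    (Subsingleton.elim (StrictMono.orderIsoOfSurjective σ h σ.surjective) (OrderIso.refl _))
  simpa using this

/-- Strict rearrangement: for a non-identity permutation, the permuted sum is smaller. -/
lemma sum_perm_lt {v : ℕ} (a b : Fin v → ℕ) (ha : StrictMono a) (hb : StrictMono b)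
    (σ : Equiv.Perm (Fin v)) (hσ : σ ≠ 1) :
    ∑ i, a i * b (σ i) < ∑ i, a i * b i := by
  have hmono : Monovary a b := fun i j hij => ha.monotone ((hb.lt_iff_lt.mp hij).le)
  rw [hmono.sum_mul_comp_perm_lt_sum_mul_iff]
  intro hcon
  apply hσ
  apply perm_eq_one_of_strictMono
  have hmonoσ : Monotone σ := by
    intro i j hij
    by_contra hns
    push_neg at hns
    have : b (σ (j : Fin v)) < b (σ i) := hb hns
    have := hcon this
    -- a j ≤ a i and i ≤ j with σ j < σ i
    rcases lt_or_eq_of_le hij with h' | h'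
    · exact absurd (ha h') (not_lt.mpr this)
    · exact absurd (congrArg σ h') (by simp [hns.ne'])
  exact hmonoσ.strictMono_of_injective σ.injective

lemma det_coeff_top {v : ℕ} (a b : Fin v → ℕ) (ha : StrictMono a) (hb : StrictMono b)
    (R : Fin v → Fin v → ℝ) :
    (Matrix.det (Matrix.of fun i j : Fin v =>
        Polynomial.C (R i j) * (X : Polynomial ℝ) ^ (a j * b i))).coeff (∑ i, a i * b i)
      = ∏ i, R i i := by
  rw [Matrix.det_apply', finset_sum_coeff]
  rw [Finset.sum_eq_single (1 : Equiv.Perm (Fin v))]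
  · simp only [Equiv.Perm.sign_one, Matrix.of_apply, Equiv.Perm.one_apply]
    have : ∀ i : Fin v, C (R i i) * (X : Polynomial ℝ) ^ (a i * b i)
        = C (R i i) * X ^ (a i * b i) := fun _ => rfl
    rw [Finset.prod_mul_distrib, ← map_prod, Finset.prod_pow_eq_pow_sum]
    rw [coeff_intCast_mul, coeff_C_mul, coeff_X_pow]
    simp
  · intro σ _ hσ
    simp only [Matrix.of_apply]
    rw [Finset.prod_mul_distrib, ← map_prod, Finset.prod_pow_eq_pow_sum]
    have hlt : ∑ i, a i * b (σ i) < ∑ i, a i * b i := sum_perm_lt a b ha hb σ hσ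
    have hexp : ∑ i, a (σ i) * b i < ∑ i, a i * b i := by
      have := sum_perm_lt b a hb ha σ hσ
      calc ∑ i, a (σ i) * b i = ∑ i, b i * a (σ i) := by simp [mul_comm]
        _ < ∑ i, b i * a i := sum_perm_lt b a hb ha σ hσ
        _ = ∑ i, a i * b i := by simp [mul_comm]
    have : ∑ i : Fin v, a i * b (σ i) ≠ ∑ i, a i * b i := ne_of_lt hlt
    rw [coeff_intCast_mul, coeff_C_mul, coeff_X_pow, if_neg (Ne.symm this)]
    simp
  · intro h
    exact absurd (Finset.mem_univ _) h

/-- For Lebesgue-almost-every real `v × v` matrix `R`, the determinant of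
the `v × v` matrix over `ℝ[D]` with `(i,j)` entry `R_{i,j} · D^(a_j * b_i)` is a
nonzero polynomial. -/
theorem ae_det_hadamard_exponent_matrix_ne_zero
    (v : ℕ) (hv : 0 < v)
    (a b : Fin v → ℕ) (ha : StrictMono a) (hb : StrictMono b) :
    ∀ᵐ R : Fin v → Fin v → ℝ ∂volume,
      Matrix.det (Matrix.of fun i j : Fin v =>
        Polynomial.C (R i j) * (X : Polynomial ℝ) ^ (a j * b i)) ≠ 0 := by
  have hdiag : ∀ᵐ R : Fin v → Fin v → ℝ ∂volume, ∀ i, R i i ≠ 0 := by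
    rw [MeasureTheory.ae_all_iff]
    intro i
    have inner : ∀ᵐ g : Fin v → ℝ ∂(volume : Measure (Fin v → ℝ)), g i ≠ (0 : ℝ) := by
      rw [volume_pi]
      exact MeasureTheory.Measure.ae_eval_ne _ i 0
    have key : ∀ᵐ R : Fin v → Fin v → ℝ
        ∂(Measure.pi fun _ : Fin v => (volume : Measure (Fin v → ℝ))), (R i) i ≠ 0 :=
      (MeasureTheory.Measure.tendsto_eval_ae_ae
        (μ := fun _ : Fin v => (volume : Measure (Fin v → ℝ))) (i := i)).eventually inner
    rw [volume_pi]
    exact key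
  filter_upwards [hdiag] with R hR hdet
  have := det_coeff_top a b ha hb R
  rw [hdet, coeff_zero] at this
  exact (Finset.prod_ne_zero_iff.mpr fun i _ => hR i) this.symm
end

section
/- Let k and s be positive integers, n = k + s, and fix integers 0 ≤ a_0 < a_1 < ... < a_{s-1} and 0 ≤ b_0 < b_1 < ... < b_{k-1}. For a real k × s matrix R, let G_R(D) = [I_k | R ∘ Y(D)] be the k × n matrix over ℝ[D] whose first k columns form the identity and whose (i, k+j) entry is R_{i,j} · D^{a_j · b_i}. Then for Lebesgue-almost-every R ∈ ℝ^{k×s}, every k × k submatrix of G_R(D) has determinant a nonzero polynomial in ℝ[D]. -/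
open Polynomial MeasureTheory

private lemma rearrange_ineq {A A' B B' : ℕ} (hA : A < A') (hB : B' < B) :
    A * B + A' * B' < A * B' + A' * B := by
  zify; nlinarith

private lemma det_submatrix_ne_zero (k s : ℕ)
    (a : Fin s → ℕ) (b : Fin k → ℕ) (ha : StrictMono a) (hb : StrictMono b)
    (R : Fin k → Fin s → ℝ) (hR : ∀ i j, R i j ≠ 0)
    (I : Finset (Fin (k + s))) (hI : I.card = k) :
    (Matrix.det ((Matrix.of fun (i : Fin k) (j : Fin (k + s)) =>
      if hj : (j : ℕ) < k
        then (if (j : ℕ) = (i : ℕ) then (1 : Polynomial ℝ) else 0)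
        else Polynomial.C (R i ⟨(j : ℕ) - k, by have := j.isLt; omega⟩) *
          X ^ (a ⟨(j : ℕ) - k, by have := j.isLt; omega⟩ * b i)).submatrix
        id (I.orderEmbOfFin hI))) ≠ 0 := by
  classical
  set f : Fin k → Fin (k + s) := fun t => I.orderEmbOfFin hI t with hfdef
  have hfmono : StrictMono f := (I.orderEmbOfFin hI).strictMono
  set c : Fin k → Fin k → ℝ := fun i t =>
    if h : ((f t : ℕ)) < k then (if (f t : ℕ) = (i : ℕ) then 1 else 0)
    else R i ⟨(f t : ℕ) - k, by have := (f t).isLt; omega⟩ with hc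
  set e : Fin k → Fin k → ℕ := fun i t =>
    if _h : ((f t : ℕ)) < k then 0
    else a ⟨(f t : ℕ) - k, by have := (f t).isLt; omega⟩ * b i with he
  set M : Matrix (Fin k) (Fin k) (Polynomial ℝ) :=
    ((Matrix.of fun (i : Fin k) (j : Fin (k + s)) =>
      if hj : (j : ℕ) < k
        then (if (j : ℕ) = (i : ℕ) then (1 : Polynomial ℝ) else 0)
        else Polynomial.C (R i ⟨(j : ℕ) - k, by have := j.isLt; omega⟩) *
          X ^ (a ⟨(j : ℕ) - k, by have := j.isLt; omega⟩ * b i)).submatrix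
        id (I.orderEmbOfFin hI)) with hMdef
  have hM : ∀ (i t : Fin k), M i t = C (c i t) * X ^ (e i t) := by
    intro i t
    rw [hMdef]
    simp only [Matrix.submatrix_apply, Matrix.of_apply, id_eq, hc, he]
    by_cases h : ((f t : ℕ)) < k
    · rw [dif_pos h, dif_pos h, dif_pos h, pow_zero, mul_one]
      split <;> simp
    · rw [dif_neg h, dif_neg h, dif_neg h]
  -- weight and product of a permutation
  set w : Equiv.Perm (Fin k) → ℕ := fun σ => ∑ t, e (σ t) t with hw
  set p : Equiv.Perm (Fin k) → ℝ := fun σ => ∏ t, c (σ t) t with hp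
  set valid : Equiv.Perm (Fin k) → Prop :=
    fun σ => ∀ t, ((f t : ℕ)) < k → ((σ t : ℕ) = (f t : ℕ)) with hvalid
  have hvalid_p : ∀ σ, valid σ → p σ ≠ 0 := by
    intro σ hσ
    refine Finset.prod_ne_zero_iff.2 fun t _ => ?_
    by_cases h : ((f t : ℕ)) < k
    · have := hσ t h
      simp only [hc]
      rw [dif_pos h, if_pos (this.symm)]
      norm_num
    · simp only [hc]
      rw [dif_neg h]
      exact hR _ _
  have hp0 : ∀ σ, ¬ valid σ → p σ = 0 := by
    intro σ hσ
    simp only [hvalid, not_forall] at hσ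
    obtain ⟨t, ht, hne⟩ := hσ
    refine Finset.prod_eq_zero (Finset.mem_univ t) ?_
    simp only [hc]
    rw [dif_pos ht, if_neg (fun hh => hne hh.symm)]
  -- the set of valid permutations is a nonempty finset
  set V : Finset (Equiv.Perm (Fin k)) := Finset.univ.filter valid with hV
  have hVne : V.Nonempty := by
    set g : Fin k → Fin k := fun t => if h : (f t : ℕ) < k then ⟨f t, h⟩ else t with hg
    have hcard : Fintype.card (Fin k) = (Finset.univ : Finset (Fin k)).card := by simp
    have hsub : (Finset.univ.filter (fun t => (f t : ℕ) < k)).image g ⊆ Finset.univ :=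
      Finset.subset_univ _
    have hinj : Set.InjOn g (Finset.univ.filter (fun t => (f t : ℕ) < k)) := by
      intro t ht t' ht' hgt
      simp only [Finset.coe_filter, Set.mem_setOf_eq] at ht ht'
      simp only [hg, dif_pos ht.2, dif_pos ht'.2, Fin.mk.injEq] at hgt
      exact hfmono.injective (Fin.val_injective hgt)
    obtain ⟨G, hG⟩ := Finset.exists_equiv_extend_of_card_eq hcard hsub hinj
    refine ⟨G.trans (Equiv.subtypeUnivEquiv (fun x => Finset.mem_univ x)), ?_⟩
    rw [hV, Finset.mem_filter]
    refine ⟨Finset.mem_univ _, fun t ht => ?_⟩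
    have h1 : ((G t : Fin k)) = g t := hG t (by simp [ht])
    have h2 : g t = ⟨(f t : ℕ), ht⟩ := by simp only [hg]; rw [dif_pos ht]
    simp only [Equiv.trans_apply, Equiv.subtypeUnivEquiv_apply]
    rw [h1, h2]
  set N : ℕ := (V.image w).max' (hVne.image w) with hN
  obtain ⟨σ₀, hσ₀V, hσ₀N⟩ := Finset.mem_image.1 ((V.image w).max'_mem (hVne.image w))
  have hle : ∀ σ ∈ V, w σ ≤ N := fun σ h => Finset.le_max' _ _ (Finset.mem_image_of_mem _ h)
  -- any maximizer is strictly monotone on non-identity columns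
  have hmono : ∀ σ ∈ V, w σ = N → ∀ t t' : Fin k, ¬((f t : ℕ) < k) → ¬((f t' : ℕ) < k) →
      t < t' → σ t < σ t' := by
    intro σ hσV hσN t t' ht ht' htt'
    by_contra hcon
    have hne : σ t ≠ σ t' := fun hh => absurd (σ.injective hh) (ne_of_lt htt')
    have hlt : σ t' < σ t := lt_of_le_of_ne (not_lt.1 hcon) (Ne.symm hne)
    set τ : Equiv.Perm (Fin k) := σ * Equiv.swap t t' with hτ
    have hτvalid : valid τ := by
      intro u hu
      have hut : u ≠ t := fun hh => ht (hh ▸ hu)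
      have hut' : u ≠ t' := fun hh => ht' (hh ▸ hu)
      have h3 : τ u = σ u := by
        simp only [hτ, Equiv.Perm.mul_apply, Equiv.swap_apply_of_ne_of_ne hut hut']
      rw [h3]
      exact (Finset.mem_filter.1 hσV).2 u hu
    have hτV : τ ∈ V := Finset.mem_filter.2 ⟨Finset.mem_univ _, hτvalid⟩
    -- w τ > w σ
    have hwτ : w τ = ∑ u, e (σ u) (Equiv.swap t t' u) := by
      simp only [hw]
      exact Fintype.sum_equiv (Equiv.swap t t') _ _ (fun u => by
        simp only [hτ, Equiv.Perm.mul_apply, Equiv.swap_apply_self])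
    have hgt : w σ < w τ := by
      rw [hwτ]
      simp only [hw]
      have htne : t ≠ t' := ne_of_lt htt'
      have htm : t' ∈ Finset.univ.erase t :=
        Finset.mem_erase.2 ⟨Ne.symm htne, Finset.mem_univ t'⟩
      rw [← Finset.add_sum_erase _ (fun u => e (σ u) u) (Finset.mem_univ t),
          ← Finset.add_sum_erase _ (fun u => e (σ u) u) htm,
          ← Finset.add_sum_erase _ (fun u => e (σ u) (Equiv.swap t t' u)) (Finset.mem_univ t),
          ← Finset.add_sum_erase _ (fun u => e (σ u) (Equiv.swap t t' u)) htm]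
      have hrest : ∑ u ∈ (Finset.univ.erase t).erase t', e (σ u) (Equiv.swap t t' u)
          = ∑ u ∈ (Finset.univ.erase t).erase t', e (σ u) u := by
        refine Finset.sum_congr rfl fun u hu => ?_
        have h1 : u ≠ t' := (Finset.mem_erase.1 hu).1
        have h2 : u ≠ t := (Finset.mem_erase.1 (Finset.mem_erase.1 hu).2).1
        rw [Equiv.swap_apply_of_ne_of_ne h2 h1]
      rw [hrest, Equiv.swap_apply_left, Equiv.swap_apply_right]
      have key : e (σ t) t + e (σ t') t' < e (σ t) t' + e (σ t') t := by
        simp only [he, dif_neg ht, dif_neg ht']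
        have hA : a ⟨(f t : ℕ) - k, by have := (f t).isLt; omega⟩
            < a ⟨(f t' : ℕ) - k, by have := (f t').isLt; omega⟩ := by
          apply ha
          have h1 : (f t : ℕ) < (f t' : ℕ) := hfmono htt'
          simp only [Fin.mk_lt_mk]
          omega
        have hB : b (σ t') < b (σ t) := hb hlt
        calc a ⟨(f t : ℕ) - k, by have := (f t).isLt; omega⟩ * b (σ t)
              + a ⟨(f t' : ℕ) - k, by have := (f t').isLt; omega⟩ * b (σ t')
            < a ⟨(f t : ℕ) - k, by have := (f t).isLt; omega⟩ * b (σ t')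
              + a ⟨(f t' : ℕ) - k, by have := (f t').isLt; omega⟩ * b (σ t) :=
              rearrange_ineq hA hB
        _ = _ := by ring
      omega
    exact absurd (hle τ hτV) (not_le.2 (hσN ▸ hgt))

  have hσ₀N' : w σ₀ = N := by rw [hN]; exact hσ₀N
  -- uniqueness of the maximizer
  set T₁ : Finset (Fin k) := Finset.univ.filter (fun t => (f t : ℕ) < k) with hT₁
  set T₂ : Finset (Fin k) := Finset.univ.filter (fun t => ¬ ((f t : ℕ) < k)) with hT₂
  set g : Fin k → Fin k := fun t => if h : (f t : ℕ) < k then ⟨f t, h⟩ else t with hg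
  have hginj : Set.InjOn g T₁ := by
    intro t ht t' ht' hgt
    simp only [hT₁, Finset.coe_filter, Set.mem_setOf_eq] at ht ht'
    simp only [hg, dif_pos ht.2, dif_pos ht'.2, Fin.mk.injEq] at hgt
    exact hfmono.injective (Fin.val_injective hgt)
  set S : Finset (Fin k) := Finset.univ \ T₁.image g with hS
  have hScard : S.card = T₂.card := by
    have hsplit := Finset.card_filter_add_card_filter_not
      (s := (Finset.univ : Finset (Fin k))) (p := fun t => (f t : ℕ) < k)
    rw [← hT₁, ← hT₂] at hsplit
    have h3 : (Finset.univ : Finset (Fin k)).card = k := by simp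
    rw [hS, Finset.card_sdiff_of_subset (Finset.subset_univ _), Finset.card_image_of_injOn hginj, h3]
    omega
  set m : ℕ := T₂.card with hm
  set emb : Fin m → Fin k := fun x => T₂.orderEmbOfFin rfl x with hemb
  have hembmem : ∀ x, emb x ∈ T₂ := fun x => Finset.orderEmbOfFin_mem T₂ rfl x
  have hembmono : StrictMono emb := (T₂.orderEmbOfFin rfl).strictMono
  have hkey : ∀ σ ∈ V, w σ = N → ∀ x : Fin m, σ (emb x) = S.orderEmbOfFin hScard x := by
    intro σ hσV hσN
    have hsm : StrictMono (fun x : Fin m => σ (emb x)) := by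
      intro x y hxy
      have hx := hembmem x
      have hy := hembmem y
      simp only [hT₂, Finset.mem_filter] at hx hy
      exact hmono σ hσV hσN _ _ hx.2 hy.2 (hembmono hxy)
    have hmem : ∀ x : Fin m, σ (emb x) ∈ S := by
      intro x
      rw [hS, Finset.mem_sdiff]
      refine ⟨Finset.mem_univ _, fun hcon => ?_⟩
      obtain ⟨u, hu, hgu⟩ := Finset.mem_image.1 hcon
      have huk : (f u : ℕ) < k := by
        simp only [hT₁, Finset.mem_filter] at hu; exact hu.2
      have hσu : σ u = g u := by
        have h1 := (Finset.mem_filter.1 hσV).2 u huk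
        apply Fin.val_injective
        rw [h1]
        simp only [hg, dif_pos huk]
      have : u = emb x := σ.injective (by rw [hσu, hgu])
      have hx := hembmem x
      simp only [hT₂, Finset.mem_filter] at hx
      exact hx.2 (this ▸ huk)
    have := Finset.orderEmbOfFin_unique hScard hmem hsm
    exact fun x => congrFun this x
  have huniq : ∀ σ ∈ V, w σ = N → σ = σ₀ := by
    intro σ hσV hσN
    ext t
    by_cases h : (f t : ℕ) < k
    · have h1 := (Finset.mem_filter.1 hσV).2 t h
      have h2 := (Finset.mem_filter.1 hσ₀V).2 t h
      rw [h1, h2]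
    · have htT₂ : t ∈ T₂ := by simp only [hT₂, Finset.mem_filter]; exact ⟨Finset.mem_univ _, h⟩
      obtain ⟨x, hx⟩ : ∃ x : Fin m, emb x = t := by
        have : t ∈ Set.range (T₂.orderEmbOfFin rfl) := by
          rw [Finset.range_orderEmbOfFin]; exact htT₂
        obtain ⟨x, hx⟩ := this
        exact ⟨x, hx⟩
      rw [← hx]
      rw [hkey σ hσV hσN x, hkey σ₀ hσ₀V hσ₀N' x]
  -- extract the coefficient of X^N in the determinant
  intro hdet
  have hco : (M.det).coeff N = 0 := by rw [hdet]; simp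
  rw [Matrix.det_apply, Polynomial.finset_sum_coeff] at hco
  have hterm : ∀ σ : Equiv.Perm (Fin k),
      (Equiv.Perm.sign σ • ∏ i, M (σ i) i).coeff N
      = Equiv.Perm.sign σ • (if w σ = N then p σ else 0) := by
    intro σ
    have hprod : ∏ i, M (σ i) i = C (p σ) * X ^ (w σ) := by
      simp only [hM]
      rw [Finset.prod_mul_distrib, ← map_prod, Finset.prod_pow_eq_pow_sum]
    rw [hprod, Polynomial.coeff_smul, Polynomial.coeff_C_mul, Polynomial.coeff_X_pow]
    by_cases hwn : w σ = N
    · rw [if_pos hwn.symm, if_pos hwn, mul_one]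
    · rw [if_neg (fun h => hwn h.symm), if_neg hwn, mul_zero]
  rw [Finset.sum_congr rfl (fun σ _ => hterm σ)] at hco
  have hsum : ∑ σ : Equiv.Perm (Fin k), Equiv.Perm.sign σ • (if w σ = N then p σ else 0)
      = Equiv.Perm.sign σ₀ • p σ₀ := by
    rw [Finset.sum_eq_single σ₀]
    · rw [if_pos hσ₀N']
    · intro σ _ hne
      by_cases hv : valid σ
      · have hσV : σ ∈ V := Finset.mem_filter.2 ⟨Finset.mem_univ _, hv⟩
        by_cases hwn : w σ = N
        · exact absurd (huniq σ hσV hwn) hne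
        · rw [if_neg hwn, smul_zero]
      · rw [hp0 σ hv]
        split <;> simp
    · intro h; exact absurd (Finset.mem_univ σ₀) h
  rw [hsum] at hco
  have hp₀ : p σ₀ ≠ 0 := hvalid_p σ₀ (Finset.mem_filter.1 hσ₀V).2
  have : p σ₀ = 0 := by
    have := hco
    rcases Int.units_eq_one_or (Equiv.Perm.sign σ₀) with h | h <;> rw [h] at this <;>
      simpa using this
  exact hp₀ this


open Polynomial MeasureTheory

/-- For Lebesgue-almost-every real `k × s` matrix `R`, every `k × k`
submatrix of `G_R(D) = [I_k | R ∘ Y(D)]` (with `(i, k+j)` entry `R_{i,j} · D^(a_j·b_i)`)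
has determinant a nonzero polynomial in `ℝ[D]`. -/
theorem ae_every_square_submatrix_of_GR_nonsingular
    (k s : ℕ) (hk : 0 < k) (hs : 0 < s)
    (a : Fin s → ℕ) (b : Fin k → ℕ) (ha : StrictMono a) (hb : StrictMono b) :
    ∀ᵐ R : Fin k → Fin s → ℝ ∂volume,
      ∀ (I : Finset (Fin (k + s))) (hI : I.card = k),
        (Matrix.det ((Matrix.of fun (i : Fin k) (j : Fin (k + s)) =>
          if hj : (j : ℕ) < k
            then (if (j : ℕ) = (i : ℕ) then (1 : Polynomial ℝ) else 0)
            else Polynomial.C (R i ⟨(j : ℕ) - k, by have := j.isLt; omega⟩) *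
              X ^ (a ⟨(j : ℕ) - k, by have := j.isLt; omega⟩ * b i)).submatrix
            id (I.orderEmbOfFin hI))) ≠ 0 := by
  have h1 : ∀ᵐ R : Fin k → Fin s → ℝ ∂volume, ∀ i j, R i j ≠ 0 := by
    rw [MeasureTheory.ae_all_iff]
    intro i
    rw [MeasureTheory.ae_all_iff]
    intro j
    rw [ae_iff]
    simp only [not_not]
    rw [volume_pi]
    have h2 : (volume : Measure (Fin s → ℝ)) {g | g j = 0} = 0 := by
      rw [volume_pi]
      exact MeasureTheory.Measure.pi_hyperplane _ j 0
    exact MeasureTheory.Measure.pi_eval_preimage_null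
      (fun _ : Fin k => (volume : Measure (Fin s → ℝ))) (i := i) h2
  filter_upwards [h1] with R hR I hI
  exact det_submatrix_ne_zero k s a b ha hb R hR I hI
end

section
/- Let k_A, k_B, s, z be positive integers, k = k_A·k_B, and n = k + s. Define the k_A × n matrix G_A(D) over ℝ[D] by: for 0 ≤ m ≤ k-1, its (i_1, m) entry is 1 if ⌊m / k_B⌋ = i_1 and 0 otherwise, and its last s columns are Y_{k_A,s}(D^z). Define the k_B × n matrix G_B(D) by: for 0 ≤ m ≤ k-1, its (i_2, m) entry is 1 if m mod k_B = i_2 and 0 otherwise, and its last s columns are Y_{k_B,s}(D). Then the Khatri–Rao product satisfies G_A(D) ⊙ G_B(D) = [I_k | Y_{k_A,s}(D^z) ⊙ Y_{k_B,s}(D)], i.e., its first k columns form the k × k identity matrix and its last s columns equal the Khatri–Rao product of Y_{k_A,s}(D^z) and Y_{k_B,s}(D). -/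
open Polynomial

/-- Columnwise Khatri–Rao product: the `ℓ`-th column is the Kronecker product of the
`ℓ`-th columns of the two factors, with row `(i₁, i₂)` of the combined matrix
corresponding to row `i₁·k_B + i₂`. -/
def khatriRao {α : Type*} [Mul α] {m n p : Type*}
    (A : Matrix m p α) (B : Matrix n p α) : Matrix (m × n) p α :=
  Matrix.of fun i j => A i.1 j * B i.2 j

/-- `G_A(D) ⊙ G_B(D) = [I_k | Y_{k_A,s}(D^z) ⊙ Y_{k_B,s}(D)]`. -/
theorem khatriRao_GA_GB
    (kA kB s z : ℕ) (hkA : 0 < kA) (hkB : 0 < kB) (hs : 0 < s) (hz : 0 < z)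
    (GA : Matrix (Fin kA) (Fin (kA * kB + s)) (Polynomial ℝ))
    (hGA : ∀ (i1 : Fin kA) (m : Fin (kA * kB + s)),
      GA i1 m = if (m : ℕ) < kA * kB
        then (if (m : ℕ) / kB = (i1 : ℕ) then 1 else 0)
        else ((X : Polynomial ℝ) ^ z) ^ ((i1 : ℕ) * ((m : ℕ) - kA * kB)))
    (GB : Matrix (Fin kB) (Fin (kA * kB + s)) (Polynomial ℝ))
    (hGB : ∀ (i2 : Fin kB) (m : Fin (kA * kB + s)),
      GB i2 m = if (m : ℕ) < kA * kB
        then (if (m : ℕ) % kB = (i2 : ℕ) then 1 else 0)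
        else (X : Polynomial ℝ) ^ ((i2 : ℕ) * ((m : ℕ) - kA * kB))) :
    ∀ (i1 : Fin kA) (i2 : Fin kB) (m : Fin (kA * kB + s)),
      khatriRao GA GB (i1, i2) m =
        if (m : ℕ) < kA * kB
          then (if (m : ℕ) = (i1 : ℕ) * kB + (i2 : ℕ) then 1 else 0)
          else ((X : Polynomial ℝ) ^ z) ^ ((i1 : ℕ) * ((m : ℕ) - kA * kB)) *
            (X : Polynomial ℝ) ^ ((i2 : ℕ) * ((m : ℕ) - kA * kB)) := by
  intro i1 i2 m
  simp only [khatriRao, Matrix.of_apply, hGA, hGB]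
  by_cases h : (m : ℕ) < kA * kB
  · simp only [if_pos h]
    have hiff : ((m : ℕ) / kB = (i1 : ℕ) ∧ (m : ℕ) % kB = (i2 : ℕ)) ↔
        (m : ℕ) = (i1 : ℕ) * kB + (i2 : ℕ) := by
      constructor
      · rintro ⟨h1, h2⟩
        have hd := Nat.div_add_mod (m : ℕ) kB
        rw [h1, h2] at hd
        rw [← hd, Nat.mul_comm]
      · intro he
        have hlt := i2.isLt
        constructor
        · rw [he, Nat.mul_comm, Nat.mul_add_div hkB, Nat.div_eq_of_lt hlt, Nat.add_zero]
        · rw [he, Nat.mul_comm, Nat.mul_add_mod, Nat.mod_eq_of_lt hlt]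
    by_cases h1 : (m : ℕ) / kB = (i1 : ℕ) <;> by_cases h2 : (m : ℕ) % kB = (i2 : ℕ) <;>
      simp_all <;> tauto
  · simp only [if_neg h]
end

section
/- With G̃ as defined, let G̃_ℓ denote the ℓ-th block-column of G̃ (a kq × q matrix for ℓ < k, and a kq × (q + a_j·b_{k-1}) matrix for ℓ = k + j). Then: (1) for 0 ≤ ℓ ≤ k-1, the (i, j') q × q block of G̃_ℓ · G̃_ℓᵀ equals I_q if i = j' = ℓ and the zero matrix otherwise; (2) for ℓ = k + j̃ with 0 ≤ j̃ ≤ s-1 and for i ≥ j', the (i, j') q × q block of G̃_ℓ · G̃_ℓᵀ equals r_{i,j̃}² · I_q if i = j', and equals r_{i,j̃}·r_{j',j̃}·U^{a_{j̃}(b_i - b_{j'})} if i > j' (the matrix being symmetric, this determines all blocks). -/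
open Matrix

private lemma sum_ite_ite {N : ℕ} (x y : ℕ) (hx : x < N) :
    (∑ c : Fin N, (if (c : ℕ) = x then (1 : ℝ) else 0) *
        (if (c : ℕ) = y then (1 : ℝ) else 0)) = if x = y then 1 else 0 := by
  rw [Finset.sum_eq_single (⟨x, hx⟩ : Fin N)]
  · simp
  · intro c _ hc
    have : (c : ℕ) ≠ x := fun h => hc (Fin.ext h)
    simp [this]
  · simp

private lemma upow_apply {q : ℕ} (U : Matrix (Fin q) (Fin q) ℝ)
    (hU : ∀ (m l : Fin q), U m l = if (l : ℕ) = (m : ℕ) + 1 then 1 else 0)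
    (p : ℕ) (m l : Fin q) :
    (U ^ p) m l = if (l : ℕ) = (m : ℕ) + p then 1 else 0 := by
  induction p generalizing m l with
  | zero =>
    simp [Matrix.one_apply, Fin.ext_iff, eq_comm]
  | succ p ih =>
    rw [pow_succ, Matrix.mul_apply]
    simp only [ih, hU]
    by_cases h : (m : ℕ) + p < q
    · rw [Finset.sum_eq_single (⟨(m : ℕ) + p, h⟩ : Fin q)]
      · simp [add_assoc]
      · intro c _ hc
        have : (c : ℕ) ≠ (m : ℕ) + p := fun hh => hc (Fin.ext hh)
        simp [this]
      · simp
    · have h1 : ¬ ((l : ℕ) = (m : ℕ) + (p + 1)) := by omega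
      have h2 : ∀ c : Fin q, ¬ ((c : ℕ) = (m : ℕ) + p) := by
        intro c; omega
      rw [if_neg h1]
      refine Finset.sum_eq_zero fun c _ => ?_
      simp [h2 c]

/-- blocks of the Gram matrices of the block-columns of `G̃`.
For a message block-column `G̃_ℓ` (`ℓ < k`), the `(i, j')` block of `G̃_ℓ·G̃_ℓᵀ`
is `I_q` if `i = j' = ℓ` and `0` otherwise.  For a parity block-column
`G̃_{k+j̃}`, and `j' ≤ i`, the `(i, j')` block is `r_{i,j̃}²·I_q` if `i = j'` and
`r_{i,j̃}·r_{j',j̃}·U^{a_{j̃}(b_i - b_{j'})}` if `i > j'`. -/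
theorem gram_blocks_of_block_columns
    (k s q : ℕ) (hk : 0 < k) (hs : 0 < s) (hq : 0 < q)
    (a : Fin s → ℕ) (b : Fin k → ℕ) (ha : StrictMono a) (hb : StrictMono b)
    (r : Fin k → Fin s → ℝ)
    (U : Matrix (Fin q) (Fin q) ℝ)
    (hU : ∀ (m l : Fin q), U m l = if (l : ℕ) = (m : ℕ) + 1 then 1 else 0)
    (Gmsg : Fin k → Matrix (Fin k × Fin q) (Fin q) ℝ)
    (hGmsg : ∀ (ℓ : Fin k) (i : Fin k) (m : Fin q) (c : Fin q),
      Gmsg ℓ (i, m) c = if i = ℓ ∧ m = c then 1 else 0)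
    (Gpar : (j : Fin s) → Matrix (Fin k × Fin q) (Fin (q + a j * b ⟨k - 1, by omega⟩)) ℝ)
    (hGpar : ∀ (j : Fin s) (i : Fin k) (m : Fin q)
        (c : Fin (q + a j * b ⟨k - 1, by omega⟩)),
      Gpar j (i, m) c = r i j * (if (c : ℕ) = a j * b i + (m : ℕ) then 1 else 0)) :
    (∀ (ℓ i j' : Fin k),
      (Matrix.of fun m l : Fin q => (Gmsg ℓ * (Gmsg ℓ)ᵀ) (i, m) (j', l)) =
        if i = ℓ ∧ j' = ℓ then (1 : Matrix (Fin q) (Fin q) ℝ) else 0)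
    ∧ (∀ (j : Fin s) (i j' : Fin k), j' ≤ i →
      (Matrix.of fun m l : Fin q => (Gpar j * (Gpar j)ᵀ) (i, m) (j', l)) =
        if i = j' then (r i j) ^ 2 • (1 : Matrix (Fin q) (Fin q) ℝ)
        else (r i j * r j' j) • U ^ (a j * (b i - b j'))) := by
  constructor
  · intro ℓ i j'
    ext m l
    rw [Matrix.of_apply, Matrix.mul_apply]
    simp only [Matrix.transpose_apply, hGmsg]
    by_cases hij : i = ℓ ∧ j' = ℓ
    · rw [Finset.sum_eq_single l]
      · simp [hij.1, hij.2, Matrix.one_apply, eq_comm]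
      · intro c _ hc
        simp [Ne.symm hc]
      · simp
    · have : ∀ c : Fin q,
          (if i = ℓ ∧ m = c then (1:ℝ) else 0) * (if j' = ℓ ∧ l = c then 1 else 0) = 0 := by
        intro c
        rcases not_and_or.mp hij with h | h <;> simp [h]
      simp [this, hij]
  · intro j i j' hle
    have hbound : ∀ x : Fin k, ∀ m : Fin q,
        a j * b x + (m : ℕ) < q + a j * b ⟨k - 1, by omega⟩ := by
      intro x m
      have hx : x ≤ (⟨k - 1, by omega⟩ : Fin k) := by
        rw [Fin.le_def]
        simp only []
        omega
      have hbx : b x ≤ b ⟨k - 1, by omega⟩ := hb.monotone hx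
      have hm := m.isLt
      have : a j * b x ≤ a j * b ⟨k - 1, by omega⟩ := Nat.mul_le_mul_left _ hbx
      omega
    ext m l
    rw [Matrix.of_apply, Matrix.mul_apply]
    simp only [Matrix.transpose_apply, hGpar]
    have key : (∑ c : Fin (q + a j * b ⟨k - 1, by omega⟩),
        (r i j * (if (c : ℕ) = a j * b i + (m : ℕ) then 1 else 0)) *
        (r j' j * (if (c : ℕ) = a j * b j' + (l : ℕ) then 1 else 0))) =
        r i j * r j' j *
          (if a j * b i + (m : ℕ) = a j * b j' + (l : ℕ) then 1 else 0) := by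
      rw [← sum_ite_ite (a j * b i + (m : ℕ)) (a j * b j' + (l : ℕ)) (hbound i m),
        Finset.mul_sum]
      apply Finset.sum_congr rfl
      intro c _
      ring
    rw [key]
    by_cases hij : i = j'
    · subst hij
      have heq : (a j * b i + (m : ℕ) = a j * b i + (l : ℕ)) ↔ (m = l) := by
        rw [Fin.ext_iff]; omega
      by_cases hml : m = l <;>
        simp [heq, hml, Matrix.one_apply, Matrix.smul_apply, pow_two, Fin.val_inj]
    · have hlt : j' < i := lt_of_le_of_ne hle (Ne.symm hij)
      have hb' : b j' ≤ b i := (hb hlt).le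
      have hmul : a j * b i = a j * b j' + a j * (b i - b j') := by
        rw [← Nat.mul_add, Nat.add_sub_cancel' hb']
      have hcond : (a j * b i + (m : ℕ) = a j * b j' + (l : ℕ)) ↔
          ((l : ℕ) = (m : ℕ) + a j * (b i - b j')) := by omega
      rw [if_neg hij, Matrix.smul_apply, upow_apply U hU, if_congr hcond rfl rfl]
      by_cases h : (l : ℕ) = (m : ℕ) + a j * (b i - b j') <;> simp [h]
end

section
/- Let k and q be positive integers. For each pair (i,j) with 0 ≤ i, j ≤ k-1, let b^{i,j} : {-(q-1),...,q-1} → ℝ satisfy b^{j,i}_m = b^{i,j}_{-m} for all m, and let B̃ be the kq × kq real symmetric block matrix whose (i,j) q × q block is Toeplitz(b^{i,j}), the matrix with (m,l) entry b^{i,j}_{m-l}. For ω ∈ [-π, π], let B(ω) be the k × k Hermitian complex matrix with (i,j) entry Σ_{m=-(q-1)}^{q-1} b^{i,j}_m · e^{-i ω m}. Then every eigenvalue of B̃ lies in the interval [min_{ω ∈ [-π,π]} λ_min(B(ω)), max_{ω ∈ [-π,π]} λ_max(B(ω))], where λ_min and λ_max denote the smallest and largest eigenvalues of a Hermitian matrix.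 -/
open Matrix

lemma fourier_aux (q : ℕ) (hq : 0 < q) (r : ℤ) (hr : r.natAbs < 2*q) :
    ∑ t : Fin (2*q), Complex.exp (Complex.I * ((-Real.pi + Real.pi * (t : ℕ) / q : ℝ) : ℂ) * (r : ℂ))
      = if r = 0 then ((2*q : ℕ) : ℂ) else 0 := by
  have hq' : (q : ℂ) ≠ 0 := Nat.cast_ne_zero.mpr hq.ne'
  set z : ℂ := Complex.exp (Real.pi * Complex.I * r / q) with hz
  have key : ∀ t : Fin (2*q),
      Complex.exp (Complex.I * ((-Real.pi + Real.pi * (t : ℕ) / q : ℝ) : ℂ) * (r : ℂ))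
        = Complex.exp (-(Real.pi : ℂ) * Complex.I * r) * z ^ (t : ℕ) := by
    intro t
    rw [hz, ← Complex.exp_nat_mul, ← Complex.exp_add]
    congr 1
    push_cast
    field_simp
  rw [Finset.sum_congr rfl (fun t _ => key t), ← Finset.mul_sum]
  rw [Fin.sum_univ_eq_sum_range (fun n => z ^ n)]
  by_cases h0 : r = 0
  · subst h0
    simp [hz]
  · have hz1 : z ≠ 1 := by
      rw [hz]
      intro h
      rw [Complex.exp_eq_one_iff] at h
      obtain ⟨n, hn⟩ := h
      have hπ : (Real.pi : ℂ) ≠ 0 := Complex.ofReal_ne_zero.mpr Real.pi_ne_zero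
      have hπI : (Real.pi : ℂ) * Complex.I ≠ 0 := mul_ne_zero hπ Complex.I_ne_zero
      have h2 : (r : ℂ) * ((Real.pi : ℂ) * Complex.I) = ((2*n*q : ℤ) : ℂ) * ((Real.pi : ℂ) * Complex.I) := by
        rw [div_eq_iff hq'] at hn
        push_cast
        linear_combination hn
      have h3 : (r : ℂ) = ((2*n*q : ℤ) : ℂ) := mul_right_cancel₀ hπI h2
      have h4 : r = 2*n*q := by exact_mod_cast h3
      have h5 : r.natAbs = 2 * n.natAbs * q := by
        rw [h4, Int.natAbs_mul, Int.natAbs_mul]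
        rfl
      rcases Nat.eq_zero_or_pos n.natAbs with hn0 | hn1
      · exact h0 (by rw [h4, Int.natAbs_eq_zero.mp hn0]; ring)
      · rw [h5] at hr
        nlinarith
    have hzN : z ^ (2*q) = 1 := by
      rw [hz, ← Complex.exp_nat_mul]
      have : (2*q : ℕ) * (Real.pi * Complex.I * r / q) = r * (2 * Real.pi * Complex.I) := by
        push_cast
        field_simp
      rw [this, Complex.exp_int_mul_two_pi_mul_I]
    rw [geom_sum_eq hz1, hzN]
    simp [h0]

lemma sum_Icc_neg (q : ℤ) (g : ℤ → ℂ) :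
    ∑ m ∈ Finset.Icc (-q+1) (q-1), g (-m) = ∑ m ∈ Finset.Icc (-q+1) (q-1), g m := by
  refine Finset.sum_nbij' (i := fun m => -m) (j := fun m => -m) ?_ ?_ ?_ ?_ ?_ <;>
    intros a ha <;> simp_all [Finset.mem_Icc] <;> omega

lemma dot_self_eq_normSq {k : ℕ} (y : Fin k → ℂ) :
    star y ⬝ᵥ y = ((∑ i, Complex.normSq (y i) : ℝ) : ℂ) := by
  unfold dotProduct
  push_cast
  refine Finset.sum_congr rfl fun i _ => ?_
  simp only [Pi.star_apply, Complex.star_def]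
  exact (Complex.normSq_eq_conj_mul_self).symm

lemma exists_eig_le {k : ℕ} {A : Matrix (Fin k) (Fin k) ℂ} (hA : A.IsHermitian)
    {x : Fin k → ℂ} (hx : x ≠ 0) {μ : ℝ}
    (h : (star x ⬝ᵥ A.mulVec x).re ≤ μ * ∑ i, Complex.normSq (x i)) :
    ∃ ν : ℝ, ν ≤ μ ∧ ∃ w : Fin k → ℂ, w ≠ 0 ∧ A.mulVec w = (ν : ℂ) • w := by
  suffices hex : ∃ i, hA.eigenvalues i ≤ μ by
    obtain ⟨i, hi⟩ := hex
    refine ⟨hA.eigenvalues i, hi, ⇑(hA.eigenvectorBasis i), ?_, ?_⟩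
    · have := hA.eigenvectorBasis.orthonormal.ne_zero i
      intro hw
      apply this
      ext j
      exact congrFun hw j
    · rw [hA.mulVec_eigenvectorBasis]
      ext j
      simp [Complex.real_smul]
  by_contra hc
  push_neg at hc
  set U : Matrix (Fin k) (Fin k) ℂ := (hA.eigenvectorUnitary : Matrix (Fin k) (Fin k) ℂ) with hUdef
  have hU1 : star U * U = 1 := (Unitary.mem_iff.mp hA.eigenvectorUnitary.2).1
  have hU2 : U * star U = 1 := (Unitary.mem_iff.mp hA.eigenvectorUnitary.2).2
  set u : Fin k → ℂ := star U *ᵥ x with hu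
  have hxu : U *ᵥ u = x := by rw [hu, mulVec_mulVec, hU2, one_mulVec]
  have hu0 : u ≠ 0 := by
    intro h0
    apply hx
    rw [← hxu, h0, mulVec_zero]
  have hQ : star x ⬝ᵥ A *ᵥ x
      = ((∑ i, hA.eigenvalues i * Complex.normSq (u i) : ℝ) : ℂ) := by
    conv_lhs => rw [hA.spectral_theorem, Unitary.conjStarAlgAut_apply]
    rw [← hUdef, ← mulVec_mulVec, ← mulVec_mulVec, dotProduct_mulVec]
    have hst : star x ᵥ* U = star u := by
      rw [hu, star_mulVec, star_eq_conjTranspose, conjTranspose_conjTranspose]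
    rw [hst]
    rw [show star (U : Matrix (Fin k) (Fin k) ℂ) = (star U : Matrix (Fin k) (Fin k) ℂ) from rfl]
    rw [← hu]
    unfold dotProduct
    push_cast
    apply Finset.sum_congr rfl
    intro i _
    rw [mulVec_diagonal]
    have : (starRingEnd ℂ) (u i) * u i = (Complex.normSq (u i) : ℂ) := by
      rw [← Complex.normSq_eq_conj_mul_self]
    calc star (u i) * (((Function.comp (RCLike.ofReal) hA.eigenvalues) i) * u i)
        = (hA.eigenvalues i : ℂ) * ((starRingEnd ℂ) (u i) * u i) := by
          simp [Function.comp]; ring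
      _ = (hA.eigenvalues i : ℂ) * (Complex.normSq (u i) : ℂ) := by rw [this]
  have hnorm : (∑ i, Complex.normSq (x i)) = ∑ i, Complex.normSq (u i) := by
    have h1 : star x ⬝ᵥ x = star u ⬝ᵥ u := by
      conv_lhs => rw [← hxu]
      rw [star_mulVec, ← dotProduct_mulVec, mulVec_mulVec]
      rw [show (Uᴴ * U : Matrix (Fin k) (Fin k) ℂ) = 1 by
        rw [← star_eq_conjTranspose]; exact hU1, one_mulVec]
    rw [dot_self_eq_normSq x, dot_self_eq_normSq u] at h1
    exact_mod_cast h1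
  have hre : (star x ⬝ᵥ A *ᵥ x).re = ∑ i, hA.eigenvalues i * Complex.normSq (u i) := by
    rw [hQ, Complex.ofReal_re]
  obtain ⟨i0, hi0⟩ := Function.ne_iff.mp hu0
  have hlt : μ * ∑ i, Complex.normSq (u i) < ∑ i, hA.eigenvalues i * Complex.normSq (u i) := by
    rw [Finset.mul_sum]
    apply Finset.sum_lt_sum
    · intro i _
      exact mul_le_mul_of_nonneg_right (hc i).le (Complex.normSq_nonneg _)
    · exact ⟨i0, Finset.mem_univ _, by
        have := Complex.normSq_pos.mpr hi0
        nlinarith [hc i0]⟩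
  rw [hre, hnorm] at h
  linarith

/-- every eigenvalue `μ` of the symmetric block-Toeplitz matrix `B̃`
lies in `[min_{ω ∈ [-π,π]} λ_min(B(ω)), max_{ω ∈ [-π,π]} λ_max(B(ω))]`; i.e. there
is some `ω ∈ [-π,π]` and an eigenvalue of `B(ω)` that is `≤ μ`, and some `ω` and an
eigenvalue of `B(ω)` that is `≥ μ` (recall that `λ_min(B(ω))` and `λ_max(B(ω))` are
themselves eigenvalues of the Hermitian matrix `B(ω)`). -/
theorem block_toeplitz_eigenvalue_bounds
    (k q : ℕ) (hk : 0 < k) (hq : 0 < q)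
    (b : Fin k → Fin k → ℤ → ℝ)
    (hsupp : ∀ (i j : Fin k) (m : ℤ), (q : ℤ) ≤ |m| → b i j m = 0)
    (hsym : ∀ (i j : Fin k) (m : ℤ), b j i m = b i j (-m))
    (Bt : Matrix (Fin k × Fin q) (Fin k × Fin q) ℝ)
    (hBt : ∀ (i j : Fin k) (m l : Fin q),
      Bt (i, m) (j, l) = b i j ((m : ℤ) - (l : ℤ)))
    (Bom : ℝ → Matrix (Fin k) (Fin k) ℂ)
    (hBom : ∀ (ω : ℝ) (i j : Fin k),
      Bom ω i j = ∑ m ∈ Finset.Icc (-(q : ℤ) + 1) ((q : ℤ) - 1),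
        (b i j m : ℂ) * Complex.exp (-(Complex.I) * (ω : ℂ) * (m : ℂ))) :
    ∀ μ : ℝ, (∃ v : Fin k × Fin q → ℝ, v ≠ 0 ∧ Bt.mulVec v = μ • v) →
      (∃ ω ∈ Set.Icc (-Real.pi) Real.pi, ∃ ν : ℝ, ν ≤ μ ∧
        ∃ w : Fin k → ℂ, w ≠ 0 ∧ (Bom ω).mulVec w = (ν : ℂ) • w)
      ∧ (∃ ω ∈ Set.Icc (-Real.pi) Real.pi, ∃ ν : ℝ, μ ≤ ν ∧
        ∃ w : Fin k → ℂ, w ≠ 0 ∧ (Bom ω).mulVec w = (ν : ℂ) • w) := by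
  intro μ ⟨v, hv0, hveq⟩
  have hπ := Real.pi_pos
  -- Hermitian symbols
  have hermB : ∀ ω : ℝ, (Bom ω).IsHermitian := by
    intro ω
    rw [Matrix.IsHermitian]
    ext i j
    rw [Matrix.conjTranspose_apply, hBom, hBom, Complex.star_def, map_sum]
    calc ∑ m ∈ Finset.Icc (-(q : ℤ) + 1) ((q : ℤ) - 1),
          (starRingEnd ℂ) ((b j i m : ℂ) * Complex.exp (-(Complex.I) * (ω : ℂ) * (m : ℂ)))
        = ∑ m ∈ Finset.Icc (-(q : ℤ) + 1) ((q : ℤ) - 1),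
          (b i j (-m) : ℂ) * Complex.exp (Complex.I * (ω : ℂ) * (m : ℂ)) := by
          refine Finset.sum_congr rfl fun m _ => ?_
          rw [_root_.map_mul, hsym i j m]
          congr 1
          · exact Complex.conj_ofReal _
          · rw [← Complex.exp_conj]
            congr 1
            simp [_root_.map_mul, Complex.conj_I, Complex.conj_ofReal]
      _ = ∑ m ∈ Finset.Icc (-(q : ℤ) + 1) ((q : ℤ) - 1),
          (b i j m : ℂ) * Complex.exp (-(Complex.I) * (ω : ℂ) * (m : ℂ)) := by
          rw [← sum_Icc_neg]
          refine Finset.sum_congr rfl fun m _ => ?_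
          congr 1
          · norm_num
          · congr 1
            push_cast
            ring
  -- the grid frequencies
  set ωf : Fin (2*q) → ℝ := fun t => -Real.pi + Real.pi * (t : ℕ) / q with hωf
  have hωmem : ∀ t, ωf t ∈ Set.Icc (-Real.pi) Real.pi := by
    intro t
    constructor
    · rw [hωf]
      have : 0 ≤ Real.pi * (t : ℕ) / q := by positivity
      linarith
    · rw [hωf]
      have ht : (t : ℕ) ≤ 2*q := le_of_lt t.isLt
      have h1 : Real.pi * (t : ℕ) / q ≤ 2 * Real.pi := by
        rw [div_le_iff₀ (by exact_mod_cast hq)]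
        have : ((t : ℕ) : ℝ) ≤ 2*q := by exact_mod_cast ht
        nlinarith
      linarith
  -- the Fourier vectors
  set f : Fin (2*q) → Fin k → ℂ := fun t i =>
    ∑ l : Fin q, (v (i, l) : ℂ) * Complex.exp (-(Complex.I) * ((ωf t : ℝ) : ℂ) * ((l : ℕ) : ℂ))
    with hfdef
  have hf : ∀ t i, f t i
      = ∑ l : Fin q, (v (i, l) : ℂ) * Complex.exp (-(Complex.I) * ((ωf t : ℝ) : ℂ) * ((l : ℕ) : ℂ)) :=
    fun t i => rfl
  have four : ∀ (r : ℤ), r.natAbs < 2*q →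
      ∑ t : Fin (2*q), Complex.exp (Complex.I * ((ωf t : ℝ) : ℂ) * (r : ℂ))
        = if r = 0 then ((2*q : ℕ) : ℂ) else 0 := by
    intro r hr
    exact fourier_aux q hq r hr
  have hconj : ∀ t i, (starRingEnd ℂ) (f t i)
      = ∑ m : Fin q, (v (i, m) : ℂ) * Complex.exp (Complex.I * ((ωf t : ℝ) : ℂ) * ((m : ℕ) : ℂ)) := by
    intro t i
    rw [hf, map_sum]
    refine Finset.sum_congr rfl fun m _ => ?_
    rw [_root_.map_mul, Complex.conj_ofReal, ← Complex.exp_conj]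
    congr 1
    simp [_root_.map_mul, Complex.conj_I, Complex.conj_ofReal]
  -- per-t expansion of the quadratic form
  have hQt : ∀ t, star (f t) ⬝ᵥ (Bom (ωf t)) *ᵥ (f t)
      = ∑ i, ∑ j, ∑ l : Fin q, ∑ n ∈ Finset.Icc (-(q : ℤ) + 1) ((q : ℤ) - 1), ∑ m : Fin q,
          (v (i, m) : ℂ) * (v (j, l) : ℂ) * (b i j n : ℂ)
            * Complex.exp (Complex.I * ((ωf t : ℝ) : ℂ) * ((((m : ℕ) : ℤ) - n - ((l : ℕ) : ℤ) : ℤ) : ℂ)) := by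
    intro t
    simp only [dotProduct, Matrix.mulVec, Pi.star_apply, Complex.star_def]
    simp only [hconj, hBom]
    simp only [hf]
    simp only [Finset.sum_mul, Finset.mul_sum]
    refine Finset.sum_congr rfl fun i _ => ?_
    refine Finset.sum_congr rfl fun j _ => ?_
    refine Finset.sum_congr rfl fun l _ => ?_
    refine Finset.sum_congr rfl fun n _ => ?_
    refine Finset.sum_congr rfl fun m _ => ?_
    have hexp : Complex.exp (Complex.I * ((ωf t : ℝ) : ℂ) * ((((m : ℕ) : ℤ) - n - ((l : ℕ) : ℤ) : ℤ) : ℂ))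
        = Complex.exp (Complex.I * ((ωf t : ℝ) : ℂ) * ((m : ℕ) : ℂ))
          * Complex.exp (-(Complex.I) * ((ωf t : ℝ) : ℂ) * (n : ℂ))
          * Complex.exp (-(Complex.I) * ((ωf t : ℝ) : ℂ) * ((l : ℕ) : ℂ)) := by
      rw [← Complex.exp_add, ← Complex.exp_add]
      congr 1
      push_cast
      ring
    rw [hexp]
    ring
  set V : ℝ := ∑ p : Fin k × Fin q, v p ^ 2 with hVdef
  -- eigen-equation, entrywise
  have hmv : ∀ (i : Fin k) (m : Fin q),
      ∑ j, ∑ l : Fin q, b i j (((m : ℕ) : ℤ) - ((l : ℕ) : ℤ)) * v (j, l) = μ * v (i, m) := by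
    intro i m
    have h := congrFun hveq (i, m)
    simp only [Matrix.mulVec, dotProduct, Pi.smul_apply, smul_eq_mul] at h
    rw [Fintype.sum_prod_type] at h
    simp only [hBt] at h
    exact h
  -- main identity: sum of quadratic forms over the frequency grid
  have H1 : ∑ t, star (f t) ⬝ᵥ (Bom (ωf t)) *ᵥ (f t) = (((2*q : ℕ) * (μ * V) : ℝ) : ℂ) := by
    rw [Finset.sum_congr rfl fun t _ => hQt t]
    have step2 : (∑ t : Fin (2*q), ∑ i, ∑ j, ∑ l : Fin q,
          ∑ n ∈ Finset.Icc (-(q : ℤ) + 1) ((q : ℤ) - 1), ∑ m : Fin q,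
          (v (i, m) : ℂ) * (v (j, l) : ℂ) * (b i j n : ℂ)
            * Complex.exp (Complex.I * ((ωf t : ℝ) : ℂ) * ((((m : ℕ) : ℤ) - n - ((l : ℕ) : ℤ) : ℤ) : ℂ)))
        = ∑ i, ∑ j, ∑ l : Fin q, ∑ m : Fin q,
          (v (i, m) : ℂ) * (v (j, l) : ℂ) * (b i j (((m : ℕ) : ℤ) - ((l : ℕ) : ℤ)) : ℂ) * ((2*q : ℕ) : ℂ) := by
      rw [Finset.sum_comm]
      refine Finset.sum_congr rfl fun i _ => ?_
      rw [Finset.sum_comm]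
      refine Finset.sum_congr rfl fun j _ => ?_
      rw [Finset.sum_comm]
      refine Finset.sum_congr rfl fun l _ => ?_
      rw [Finset.sum_congr rfl fun t (_ : t ∈ Finset.univ) => Finset.sum_comm,
        Finset.sum_comm]
      refine Finset.sum_congr rfl fun m _ => ?_
      rw [Finset.sum_comm]
      calc ∑ n ∈ Finset.Icc (-(q : ℤ) + 1) ((q : ℤ) - 1), ∑ t : Fin (2*q),
              (v (i, m) : ℂ) * (v (j, l) : ℂ) * (b i j n : ℂ)
                * Complex.exp (Complex.I * ((ωf t : ℝ) : ℂ) * ((((m : ℕ) : ℤ) - n - ((l : ℕ) : ℤ) : ℤ) : ℂ))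
          = ∑ n ∈ Finset.Icc (-(q : ℤ) + 1) ((q : ℤ) - 1),
              (v (i, m) : ℂ) * (v (j, l) : ℂ) * (b i j n : ℂ)
                * (if (((m : ℕ) : ℤ) - n - ((l : ℕ) : ℤ) : ℤ) = 0 then ((2*q : ℕ) : ℂ) else 0) := by
            refine Finset.sum_congr rfl fun n hn => ?_
            rw [← Finset.mul_sum, four _ ?_]
            rw [Finset.mem_Icc] at hn
            have hm := m.isLt
            have hl := l.isLt
            omega
        _ = ∑ n ∈ Finset.Icc (-(q : ℤ) + 1) ((q : ℤ) - 1),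
              (if n = (((m : ℕ) : ℤ) - ((l : ℕ) : ℤ)) then
                (v (i, m) : ℂ) * (v (j, l) : ℂ) * (b i j n : ℂ) * ((2*q : ℕ) : ℂ) else 0) := by
            refine Finset.sum_congr rfl fun n _ => ?_
            rw [mul_ite, mul_zero]
            exact if_congr (by omega) rfl rfl
        _ = (v (i, m) : ℂ) * (v (j, l) : ℂ) * (b i j (((m : ℕ) : ℤ) - ((l : ℕ) : ℤ)) : ℂ) * ((2*q : ℕ) : ℂ) := by
            rw [Finset.sum_ite_eq' _ _ (fun n => (v (i, m) : ℂ) * (v (j, l) : ℂ) * (b i j n : ℂ) * ((2*q : ℕ) : ℂ))]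
            rw [if_pos]
            rw [Finset.mem_Icc]
            have hm := m.isLt
            have hl := l.isLt
            omega
    rw [step2]
    have step3a : (∑ i, ∑ j, ∑ l : Fin q, ∑ m : Fin q,
          (v (i, m) : ℂ) * (v (j, l) : ℂ) * (b i j (((m : ℕ) : ℤ) - ((l : ℕ) : ℤ)) : ℂ) * ((2*q : ℕ) : ℂ))
        = ∑ i, ∑ m : Fin q, ∑ j, ∑ l : Fin q,
          (v (i, m) : ℂ) * (v (j, l) : ℂ) * (b i j (((m : ℕ) : ℤ) - ((l : ℕ) : ℤ)) : ℂ) * ((2*q : ℕ) : ℂ) := by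
      refine Finset.sum_congr rfl fun i _ => ?_
      rw [Finset.sum_congr rfl fun j (_ : j ∈ Finset.univ) => Finset.sum_comm,
        Finset.sum_comm]
    rw [step3a]
    have step3b : ∀ (i : Fin k) (m : Fin q),
        (∑ j, ∑ l : Fin q,
          (v (i, m) : ℂ) * (v (j, l) : ℂ) * (b i j (((m : ℕ) : ℤ) - ((l : ℕ) : ℤ)) : ℂ) * ((2*q : ℕ) : ℂ))
        = ((2*q : ℕ) : ℂ) * (((μ : ℝ) : ℂ) * (v (i, m) : ℂ) * (v (i, m) : ℂ)) := by
      intro i m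
      have hc : ((μ * v (i, m) : ℝ) : ℂ)
          = ∑ j, ∑ l : Fin q, (b i j (((m : ℕ) : ℤ) - ((l : ℕ) : ℤ)) : ℂ) * (v (j, l) : ℂ) := by
        rw [← hmv i m]
        push_cast
        rfl
      calc (∑ j, ∑ l : Fin q,
            (v (i, m) : ℂ) * (v (j, l) : ℂ) * (b i j (((m : ℕ) : ℤ) - ((l : ℕ) : ℤ)) : ℂ) * ((2*q : ℕ) : ℂ))
          = ((v (i, m) : ℂ) * ((2*q : ℕ) : ℂ)) * ∑ j, ∑ l : Fin q,
              (b i j (((m : ℕ) : ℤ) - ((l : ℕ) : ℤ)) : ℂ) * (v (j, l) : ℂ) := by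
            rw [Finset.mul_sum]
            refine Finset.sum_congr rfl fun j _ => ?_
            rw [Finset.mul_sum]
            refine Finset.sum_congr rfl fun l _ => ?_
            ring
        _ = ((v (i, m) : ℂ) * ((2*q : ℕ) : ℂ)) * ((μ * v (i, m) : ℝ) : ℂ) := by rw [hc]
        _ = ((2*q : ℕ) : ℂ) * (((μ : ℝ) : ℂ) * (v (i, m) : ℂ) * (v (i, m) : ℂ)) := by
            push_cast
            ring
    rw [Finset.sum_congr rfl fun i (_ : i ∈ Finset.univ) =>
      Finset.sum_congr rfl fun m (_ : m ∈ Finset.univ) => step3b i m]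
    rw [hVdef]
    push_cast
    rw [Fintype.sum_prod_type]
    simp only [Finset.mul_sum]
    refine Finset.sum_congr rfl fun i _ => Finset.sum_congr rfl fun m _ => by ring
  -- norm identity over the grid
  have hSt : ∀ t, star (f t) ⬝ᵥ (f t)
      = ∑ i, ∑ l : Fin q, ∑ m : Fin q, (v (i, m) : ℂ) * (v (i, l) : ℂ)
          * Complex.exp (Complex.I * ((ωf t : ℝ) : ℂ) * ((((m : ℕ) : ℤ) - ((l : ℕ) : ℤ) : ℤ) : ℂ)) := by
    intro t
    simp only [dotProduct, Pi.star_apply, Complex.star_def]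
    simp only [hconj]
    simp only [hf]
    simp only [Finset.sum_mul, Finset.mul_sum]
    refine Finset.sum_congr rfl fun i _ => ?_
    refine Finset.sum_congr rfl fun l _ => ?_
    refine Finset.sum_congr rfl fun m _ => ?_
    have hexp : Complex.exp (Complex.I * ((ωf t : ℝ) : ℂ) * ((((m : ℕ) : ℤ) - ((l : ℕ) : ℤ) : ℤ) : ℂ))
        = Complex.exp (Complex.I * ((ωf t : ℝ) : ℂ) * ((m : ℕ) : ℂ))
          * Complex.exp (-(Complex.I) * ((ωf t : ℝ) : ℂ) * ((l : ℕ) : ℂ)) := by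
      rw [← Complex.exp_add]
      congr 1
      push_cast
      ring
    rw [hexp]
    ring
  have H2 : ∑ t, star (f t) ⬝ᵥ (f t) = (((2*q : ℕ) * V : ℝ) : ℂ) := by
    rw [Finset.sum_congr rfl fun t _ => hSt t]
    rw [Finset.sum_comm]
    have step2 : ∀ i : Fin k, (∑ t : Fin (2*q), ∑ l : Fin q, ∑ m : Fin q,
          (v (i, m) : ℂ) * (v (i, l) : ℂ)
            * Complex.exp (Complex.I * ((ωf t : ℝ) : ℂ) * ((((m : ℕ) : ℤ) - ((l : ℕ) : ℤ) : ℤ) : ℂ)))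
        = ∑ l : Fin q, (v (i, l) : ℂ) * (v (i, l) : ℂ) * ((2*q : ℕ) : ℂ) := by
      intro i
      rw [Finset.sum_comm]
      refine Finset.sum_congr rfl fun l _ => ?_
      rw [Finset.sum_comm]
      calc (∑ m : Fin q, ∑ t : Fin (2*q), (v (i, m) : ℂ) * (v (i, l) : ℂ)
              * Complex.exp (Complex.I * ((ωf t : ℝ) : ℂ) * ((((m : ℕ) : ℤ) - ((l : ℕ) : ℤ) : ℤ) : ℂ)))
          = ∑ m : Fin q, (if m = l then (v (i, m) : ℂ) * (v (i, l) : ℂ) * ((2*q : ℕ) : ℂ) else 0) := by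
            refine Finset.sum_congr rfl fun m _ => ?_
            rw [← Finset.mul_sum, four _ ?_]
            · rw [mul_ite, mul_zero]
              refine if_congr ?_ rfl rfl
              constructor
              · intro h
                exact Fin.ext (by omega)
              · intro h
                rw [h]
                ring
            · have hm := m.isLt
              have hl := l.isLt
              omega
        _ = (v (i, l) : ℂ) * (v (i, l) : ℂ) * ((2*q : ℕ) : ℂ) := by
            rw [Finset.sum_ite_eq' _ _ (fun m => (v (i, m) : ℂ) * (v (i, l) : ℂ) * ((2*q : ℕ) : ℂ))]
            rw [if_pos (Finset.mem_univ l)]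
    rw [Finset.sum_congr rfl fun i (_ : i ∈ Finset.univ) => step2 i]
    rw [hVdef]
    push_cast
    rw [Fintype.sum_prod_type]
    simp only [Finset.mul_sum]
    refine Finset.sum_congr rfl fun i _ => Finset.sum_congr rfl fun l _ => by ring
  -- pass to real statements
  set S : Fin (2*q) → ℝ := fun t => ∑ i, Complex.normSq (f t i) with hSdef
  have hsumS : ∑ t, S t = (2*q : ℕ) * V := by
    have h := H2
    rw [Finset.sum_congr rfl fun t _ => dot_self_eq_normSq (f t)] at h
    rw [show (∑ t : Fin (2*q), ((∑ i, Complex.normSq (f t i) : ℝ) : ℂ))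
        = ((∑ t : Fin (2*q), ∑ i, Complex.normSq (f t i) : ℝ) : ℂ) from (Complex.ofReal_sum _ _).symm] at h
    exact_mod_cast h
  have hsumQ : ∑ t, (star (f t) ⬝ᵥ (Bom (ωf t)) *ᵥ (f t)).re = (2*q : ℕ) * (μ * V) := by
    rw [← Complex.re_sum, H1, Complex.ofReal_re]
  have hVpos : 0 < V := by
    obtain ⟨p, hp⟩ := Function.ne_iff.mp hv0
    refine Finset.sum_pos' (fun p _ => sq_nonneg _) ⟨p, Finset.mem_univ _, ?_⟩
    have : v p ≠ 0 := hp
    positivity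
  have hex : ∃ t, f t ≠ 0 := by
    by_contra hcon
    push_neg at hcon
    have hz : ∑ t, S t = 0 := by
      refine Finset.sum_eq_zero fun t _ => ?_
      rw [hSdef]
      simp only [hcon t]
      simp
    rw [hsumS] at hz
    have : (0:ℝ) < (2*q : ℕ) * V := by positivity
    rw [hz] at this
    exact lt_irrefl _ this
  set a : Fin (2*q) → ℝ := fun t => (star (f t) ⬝ᵥ (Bom (ωf t)) *ᵥ (f t)).re - μ * S t with hadef
  have hsa : ∑ t, a t = 0 := by
    rw [hadef]
    rw [Finset.sum_sub_distrib, hsumQ, ← Finset.mul_sum, hsumS]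
    ring
  have haz : ∀ t, f t = 0 → a t = 0 := by
    intro t h
    rw [hadef]
    simp only [h, hSdef]
    simp
  have key1 : ∃ t, f t ≠ 0 ∧ a t ≤ 0 := by
    by_contra hcon
    push_neg at hcon
    obtain ⟨t0, ht0⟩ := hex
    have hpos : 0 < ∑ t, a t := by
      refine Finset.sum_pos' (fun t _ => ?_) ⟨t0, Finset.mem_univ _, hcon t0 ht0⟩
      by_cases h : f t = 0
      · rw [haz t h]
      · exact (hcon t h).le
    rw [hsa] at hpos
    exact lt_irrefl _ hpos
  have key2 : ∃ t, f t ≠ 0 ∧ 0 ≤ a t := by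
    by_contra hcon
    push_neg at hcon
    obtain ⟨t0, ht0⟩ := hex
    have hneg : ∑ t, a t < 0 := by
      have : ∀ t ∈ Finset.univ, a t ≤ 0 := by
        intro t _
        by_cases h : f t = 0
        · rw [haz t h]
        · exact (hcon t h).le
      refine Finset.sum_neg' this ⟨t0, Finset.mem_univ _, hcon t0 ht0⟩
    rw [hsa] at hneg
    exact lt_irrefl _ hneg
  constructor
  · obtain ⟨t, hft, hat⟩ := key1
    have hle : (star (f t) ⬝ᵥ (Bom (ωf t)).mulVec (f t)).re ≤ μ * ∑ i, Complex.normSq (f t i) := by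
      have := hat
      rw [hadef] at this
      simp only at this
      linarith [this]
    obtain ⟨ν, hν, w, hw, hwe⟩ := exists_eig_le (hermB (ωf t)) hft hle
    exact ⟨ωf t, hωmem t, ν, hν, w, hw, hwe⟩
  · obtain ⟨t, hft, hat⟩ := key2
    have hge : μ * ∑ i, Complex.normSq (f t i) ≤ (star (f t) ⬝ᵥ (Bom (ωf t)).mulVec (f t)).re := by
      have := hat
      rw [hadef] at this
      simp only at this
      linarith [this]
    have hermN : (-(Bom (ωf t))).IsHermitian := (hermB (ωf t)).neg
    have hcond : (star (f t) ⬝ᵥ (-(Bom (ωf t))).mulVec (f t)).re ≤ (-μ) * ∑ i, Complex.normSq (f t i) := by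
      rw [Matrix.neg_mulVec, dotProduct_neg, Complex.neg_re]
      linarith
    obtain ⟨ν, hν, w, hw, hwe⟩ := exists_eig_le hermN hft hcond
    refine ⟨ωf t, hωmem t, -ν, by linarith, w, hw, ?_⟩
    rw [Matrix.neg_mulVec] at hwe
    have h2 : (Bom (ωf t)) *ᵥ w = -((ν : ℂ) • w) := by
      rw [← hwe, neg_neg]
    rw [h2, ← neg_smul]
    push_cast
    ring_nf
end

section
/- Let v be a positive integer and let λ_0 ≥ λ_1 ≥ ... ≥ λ_{v-1} ≥ 0 be integers. In the multivariate polynomial ring ℤ[X_0,...,X_{v-1}], let M be the v × v matrix whose (i,j) entry is X_j^{λ_i + v - 1 - i}. Then there exists a nonzero polynomial S ∈ ℤ[X_0,...,X_{v-1}] all of whose coefficients are nonnegative such that det M = (∏_{0 ≤ i < j ≤ v-1} (X_i - X_j)) · S. -/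
open MvPolynomial

lemma my_nonneg_mul {σ : Type*} {p q : MvPolynomial σ ℤ}
    (hp : ∀ d, 0 ≤ p.coeff d) (hq : ∀ d, 0 ≤ q.coeff d) : ∀ d, 0 ≤ (p * q).coeff d := by
  classical
  intro d
  rw [MvPolynomial.coeff_mul]
  exact Finset.sum_nonneg fun x _ => mul_nonneg (hp _) (hq _)

lemma my_nonneg_X_pow {σ : Type*} (i : σ) (k : ℕ) :
    ∀ d, (0:ℤ) ≤ (((X i : MvPolynomial σ ℤ)) ^ k).coeff d := by
  classical
  intro d
  rw [MvPolynomial.coeff_X_pow]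
  split <;> norm_num

lemma my_nonneg_sum {σ ι : Type*} (s : Finset ι) (g : ι → MvPolynomial σ ℤ)
    (h : ∀ i ∈ s, ∀ d, 0 ≤ (g i).coeff d) : ∀ d, 0 ≤ (∑ i ∈ s, g i).coeff d := by
  intro d
  rw [MvPolynomial.coeff_sum]
  exact Finset.sum_nonneg fun i hi => h i hi d

lemma my_nonneg_prod {σ ι : Type*} (s : Finset ι) (g : ι → MvPolynomial σ ℤ)
    (h : ∀ i ∈ s, ∀ d, 0 ≤ (g i).coeff d) : ∀ d, 0 ≤ (∏ i ∈ s, g i).coeff d := by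
  classical
  induction s using Finset.induction_on with
  | empty => intro d; rw [Finset.prod_empty, MvPolynomial.coeff_one]; split <;> norm_num
  | insert a t hx ih =>
      rw [Finset.prod_insert hx]
      exact my_nonneg_mul (h a (Finset.mem_insert_self a t))
        (ih fun i hi => h i (Finset.mem_insert_of_mem hi))


lemma my_nonneg_rename {σ τ : Type*} (f : σ → τ) (hf : Function.Injective f)
    {p : MvPolynomial σ ℤ} (hp : ∀ d, 0 ≤ p.coeff d) :
    ∀ d, 0 ≤ (rename f p).coeff d := by
  intro d
  by_cases h : (rename f p).coeff d = 0
  · simp [h]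
  · obtain ⟨u, hu, -⟩ := coeff_rename_ne_zero f p d h
    rw [← hu, coeff_rename_mapDomain f hf]
    exact hp u

lemma my_sum_ne_zero {σ ι : Type*} (s : Finset ι) (g : ι → MvPolynomial σ ℤ)
    (h : ∀ i ∈ s, ∀ d, 0 ≤ (g i).coeff d) {i₀ : ι} (hi₀ : i₀ ∈ s) (hne : g i₀ ≠ 0) :
    (∑ i ∈ s, g i) ≠ 0 := by
  obtain ⟨d, hd⟩ : ∃ d, (g i₀).coeff d ≠ 0 := by
    by_contra hc
    push_neg at hc
    exact hne (MvPolynomial.ext _ _ fun d => by simp [hc d])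
  intro h0
  have : (0:ℤ) < (∑ i ∈ s, g i).coeff d := by
    rw [MvPolynomial.coeff_sum]
    exact Finset.sum_pos' (fun i hi => h i hi d) ⟨i₀, hi₀, lt_of_le_of_ne (h i₀ hi₀ d) (Ne.symm hd)⟩
  rw [h0] at this
  simp at this

lemma my_pow_factor {R : Type*} [CommRing R] (x y : R) {a b : ℕ} (hba : b ≤ a) :
    x ^ a - y ^ (a - b) * x ^ b = (x - y) * ∑ r ∈ Finset.Ico b a, x ^ r * y ^ (a - 1 - r) := by
  obtain ⟨k, rfl⟩ := Nat.exists_eq_add_of_le hba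
  rw [Finset.sum_Ico_eq_sum_range]
  simp only [Nat.add_sub_cancel_left]
  have h1 : ∀ s ∈ Finset.range k, x ^ (b + s) * y ^ (b + k - 1 - (b + s)) = x ^ b * (x ^ s * y ^ (k - 1 - s)) := by
    intro s hs
    rw [pow_add]
    ring_nf
    congr 2
    omega
  rw [Finset.sum_congr rfl h1, ← Finset.mul_sum, pow_add]
  linear_combination (-(x ^ b)) * geom_sum₂_mul x y k

lemma my_Ioi_split {M : Type*} [CommMonoid M] {n : ℕ} (f : Fin (n+1) → Fin (n+1) → M) :
    (∏ i : Fin (n+1), ∏ j ∈ Finset.Ioi i, f i j) =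
      (∏ i : Fin n, ∏ j ∈ Finset.Ioi i, f i.castSucc j.castSucc) *
        ∏ i : Fin n, f i.castSucc (Fin.last n) := by
  rw [Fin.prod_univ_castSucc]
  have hlast : (Finset.Ioi (Fin.last n)) = ∅ := by
    ext j
    simp only [Finset.mem_Ioi, Finset.notMem_empty, iff_false, not_lt]
    exact Fin.le_last j
  rw [hlast, Finset.prod_empty, mul_one, ← Finset.prod_mul_distrib]
  refine Finset.prod_congr rfl fun i _ => ?_
  have hIoi : Finset.Ioi (Fin.castSucc i) =
      insert (Fin.last n) ((Finset.Ioi i).map Fin.castSuccEmb) := by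
    ext j
    constructor
    · intro hj
      rw [Finset.mem_Ioi] at hj
      by_cases hjn : (j : ℕ) = n
      · exact Finset.mem_insert.mpr (Or.inl (Fin.ext hjn))
      · refine Finset.mem_insert.mpr (Or.inr ?_)
        have hjlt : (j : ℕ) < n := by have := j.isLt; omega
        refine Finset.mem_map.mpr ⟨⟨(j:ℕ), hjlt⟩, Finset.mem_Ioi.mpr ?_, Fin.ext rfl⟩
        rw [Fin.lt_def] at hj ⊢
        simpa using hj
    · intro hj
      rw [Finset.mem_Ioi]
      rcases Finset.mem_insert.mp hj with rfl | hmem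
      · exact Fin.castSucc_lt_last i
      · obtain ⟨j', hj', rfl⟩ := Finset.mem_map.mp hmem
        exact Fin.castSucc_lt_castSucc_iff.mpr (Finset.mem_Ioi.mp hj')
  have hnotmem : Fin.last n ∉ (Finset.Ioi i).map Fin.castSuccEmb := by
    intro hmem
    obtain ⟨j', -, hj⟩ := Finset.mem_map.mp hmem
    exact absurd (hj ▸ Fin.castSucc_lt_last j') (lt_irrefl _)
  rw [hIoi, Finset.prod_insert hnotmem, Finset.prod_map, mul_comm]
  rfl

lemma my_det_rowops {R : Type*} [CommRing R] {n : ℕ} (A : Matrix (Fin (n+1)) (Fin (n+1)) R)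
    (c : Fin n → R) :
    (Matrix.of fun (i j : Fin (n+1)) =>
        if h : (i : ℕ) < n then
          A i j - c ⟨i, h⟩ * A ⟨(i:ℕ)+1, Nat.succ_lt_succ h⟩ j
        else A i j).det = A.det := by
  suffices H : ∀ m : ℕ, (Matrix.of fun (i j : Fin (n+1)) =>
      if (i : ℕ) < m then
        (if h : (i : ℕ) < n then A i j - c ⟨i, h⟩ * A ⟨(i:ℕ)+1, Nat.succ_lt_succ h⟩ j else A i j)
      else A i j).det = A.det by
    rw [← H n]
    congr 1
    ext i j
    simp only [Matrix.of_apply]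
    by_cases h : (i : ℕ) < n
    · simp only [if_pos h, dif_pos h, if_pos (show (i:ℕ) < n from h)]
    · simp only [if_neg h, dif_neg h]
  intro m
  induction m with
  | zero => simp; rfl
  | succ m ihm =>
    by_cases hm : m < n
    · have hm1 : m < n + 1 := by omega
      have hm2 : m + 1 < n + 1 := by omega
      set Dm : Matrix (Fin (n+1)) (Fin (n+1)) R := Matrix.of fun (i j : Fin (n+1)) =>
        if (i : ℕ) < m then
          (if h : (i : ℕ) < n then A i j - c ⟨i, h⟩ * A ⟨(i:ℕ)+1, Nat.succ_lt_succ h⟩ j else A i j)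
        else A i j with hDm
      have hne : (⟨m, hm1⟩ : Fin (n+1)) ≠ ⟨m+1, hm2⟩ := by simp [Fin.ext_iff]
      have key := Matrix.det_updateRow_add_smul_self Dm hne (-(c ⟨m, hm⟩))
      rw [← ihm, ← key]
      congr 1
      ext i j
      rw [Matrix.updateRow_apply]
      by_cases hi : i = (⟨m, hm1⟩ : Fin (n+1))
      · subst hi
        simp only [if_pos rfl, Pi.add_apply, Pi.smul_apply, smul_eq_mul, hDm, Matrix.of_apply]
        rw [if_pos (by omega : m < m + 1), dif_pos hm]
        split_ifs <;> first | omega | ring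
      · have hiv : (i : ℕ) ≠ m := fun h => hi (Fin.ext h)
        rw [if_neg hi]
        simp only [hDm, Matrix.of_apply]
        by_cases h1 : (i : ℕ) < m
        · rw [if_pos h1, if_pos (by omega : (i:ℕ) < m + 1)]
        · rw [if_neg h1, if_neg (by omega : ¬ (i:ℕ) < m + 1)]
    · rw [← ihm]
      congr 1
      ext i j
      simp only [Matrix.of_apply]
      by_cases h1 : (i : ℕ) < m
      · rw [if_pos h1, if_pos (by omega : (i:ℕ) < m + 1)]
      · by_cases h2 : (i : ℕ) < m + 1
        · have : ¬ (i : ℕ) < n := by omega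
          rw [if_pos h2, if_neg h1, dif_neg this]
        · rw [if_neg h1, if_neg h2]

lemma schur_key (n : ℕ) (κ : Fin n → ℕ) (hκ : StrictAnti κ) :
    ∃ S : MvPolynomial (Fin n) ℤ, S ≠ 0 ∧ (∀ d, 0 ≤ S.coeff d) ∧
      (Matrix.of fun (i j : Fin n) => (X j : MvPolynomial (Fin n) ℤ) ^ κ i).det =
        (∏ i : Fin n, ∏ j ∈ Finset.Ioi i, ((X i : MvPolynomial (Fin n) ℤ) - X j)) * S := by
  induction n with
  | zero =>
      exact ⟨1, one_ne_zero, fun d => by rw [MvPolynomial.coeff_one]; split <;> norm_num, by rw [Matrix.det_isEmpty, Finset.univ_eq_empty, Finset.prod_empty, one_mul]⟩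
  | succ n ih =>
    classical
    set L : Fin (n+1) := Fin.last n with hL
    set A : Matrix (Fin (n+1)) (Fin (n+1)) (MvPolynomial (Fin (n+1)) ℤ) :=
      Matrix.of fun i j => (X j : MvPolynomial (Fin (n+1)) ℤ) ^ κ i with hA
    set c : Fin n → MvPolynomial (Fin (n+1)) ℤ :=
      fun i => (X L : MvPolynomial (Fin (n+1)) ℤ) ^ (κ i.castSucc - κ i.succ) with hc
    set B : Matrix (Fin (n+1)) (Fin (n+1)) (MvPolynomial (Fin (n+1)) ℤ) :=
      Matrix.of fun (i j : Fin (n+1)) =>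
        if h : (i : ℕ) < n then A i j - c ⟨i, h⟩ * A ⟨(i:ℕ)+1, Nat.succ_lt_succ h⟩ j
        else A i j with hB
    have hdetB : B.det = A.det := my_det_rowops A c
    -- the entries of the last column of B vanish except the last
    have hcol : ∀ i : Fin (n+1), (i : ℕ) < n → B i L = 0 := by
      intro i hi
      have hcs : (⟨(i:ℕ), hi⟩ : Fin n).castSucc = i := Fin.ext rfl
      have hsucc : (⟨(i:ℕ)+1, Nat.succ_lt_succ hi⟩ : Fin (n+1)) = (⟨(i:ℕ), hi⟩ : Fin n).succ :=
        Fin.ext rfl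
      have hsub : κ (⟨(i:ℕ), hi⟩ : Fin n).succ ≤ κ (⟨(i:ℕ), hi⟩ : Fin n).castSucc :=
        (hκ (Fin.castSucc_lt_succ (i := _))).le
      simp only [hB, Matrix.of_apply, dif_pos hi, hA, hc, hsucc, ← pow_add]
      rw [Nat.sub_add_cancel hsub, hcs, sub_self]
    have hBLL : B L L = (X L : MvPolynomial (Fin (n+1)) ℤ) ^ κ L := by
      simp only [hB, Matrix.of_apply, hA]
      rw [dif_neg (show ¬ ((L:ℕ) < n) by simp [hL])]
    set C : Matrix (Fin n) (Fin n) (MvPolynomial (Fin (n+1)) ℤ) :=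
      B.submatrix Fin.castSucc Fin.castSucc with hC
    have hdetBC : B.det = (X L : MvPolynomial (Fin (n+1)) ℤ) ^ κ L * C.det := by
      rw [Matrix.det_succ_column B L, Finset.sum_eq_single L]
      · rw [hBLL]
        have h1 : ((L:ℕ) + (L:ℕ) : ℕ) = n + n := by simp [hL]
        rw [h1, Even.neg_one_pow ⟨n, rfl⟩, one_mul]
        congr 1
        rw [hC, hL]
        rw [Fin.succAbove_last]
      · intro i _ hiL
        have hi : (i:ℕ) < n := by
          have h1 := i.isLt
          have h2 : (i:ℕ) ≠ n := fun h => hiL (by ext; simp [hL, h])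
          omega
        rw [hcol i hi, mul_zero, zero_mul]
      · intro h; exact absurd (Finset.mem_univ L) h
    have hCentry : ∀ (i j : Fin n), C i j =
        ((X j.castSucc : MvPolynomial (Fin (n+1)) ℤ) - X L) *
          ∑ r ∈ Finset.Ico (κ i.succ) (κ i.castSucc),
            (X j.castSucc : MvPolynomial (Fin (n+1)) ℤ) ^ r * (X L) ^ (κ i.castSucc - 1 - r) := by
      intro i j
      have hlt : ((i.castSucc : Fin (n+1)) : ℕ) < n := i.isLt
      have h1 : (⟨((i.castSucc : Fin (n+1)) : ℕ), hlt⟩ : Fin n) = i := Fin.ext rfl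
      have h2 : (⟨((i.castSucc : Fin (n+1)) : ℕ)+1, Nat.succ_lt_succ hlt⟩ : Fin (n+1)) = i.succ :=
        Fin.ext rfl
      simp only [hC, Matrix.submatrix_apply, hB, Matrix.of_apply, dif_pos hlt, h1, h2, hA, hc]
      exact my_pow_factor _ _ ((hκ (Fin.castSucc_lt_succ (i := i))).le)
    set ranges : Fin n → Finset ℕ := fun i => Finset.Ico (κ i.succ) (κ i.castSucc) with hranges
    set D : Matrix (Fin n) (Fin n) (MvPolynomial (Fin (n+1)) ℤ) :=
      Matrix.of fun i j => ∑ r ∈ ranges i,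
        (X j.castSucc : MvPolynomial (Fin (n+1)) ℤ) ^ r * (X L) ^ (κ i.castSucc - 1 - r) with hD
    have hdetCD : C.det =
        (∏ j : Fin n, ((X j.castSucc : MvPolynomial (Fin (n+1)) ℤ) - X L)) * D.det := by
      rw [← Matrix.det_mul_row]
      congr 1
      exact Matrix.ext fun i j => hCentry i j
    have hdetD : D.det = ∑ ρ ∈ Fintype.piFinset ranges,
        Matrix.det (Matrix.of fun (i j : Fin n) =>
          (X j.castSucc : MvPolynomial (Fin (n+1)) ℤ) ^ ρ i * (X L) ^ (κ i.castSucc - 1 - ρ i)) := by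
      have hDeq : (D : Matrix (Fin n) (Fin n) (MvPolynomial (Fin (n+1)) ℤ)) =
          fun i => ∑ r ∈ ranges i, (fun j =>
            (X j.castSucc : MvPolynomial (Fin (n+1)) ℤ) ^ r * (X L) ^ (κ i.castSucc - 1 - r)) := by
        funext i j
        rw [Finset.sum_apply]
        rfl
      show Matrix.detRowAlternating D = _
      rw [hDeq]
      exact (Matrix.detRowAlternating (R := MvPolynomial (Fin (n+1)) ℤ)
        (n := Fin n)).toMultilinearMap.map_sum_finset _ _
    have hterm : ∀ ρ : Fin n → ℕ,
        Matrix.det (Matrix.of fun (i j : Fin n) =>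
            (X j.castSucc : MvPolynomial (Fin (n+1)) ℤ) ^ ρ i * (X L) ^ (κ i.castSucc - 1 - ρ i))
          = (∏ i : Fin n, (X L : MvPolynomial (Fin (n+1)) ℤ) ^ (κ i.castSucc - 1 - ρ i)) *
            Matrix.det (Matrix.of fun (i j : Fin n) =>
              (X j.castSucc : MvPolynomial (Fin (n+1)) ℤ) ^ ρ i) := by
      intro ρ
      rw [← Matrix.det_mul_column]
      congr 1
      exact Matrix.ext fun i j => mul_comm _ _
    have hrename : ∀ ρ : Fin n → ℕ,
        rename (Fin.castSucc : Fin n → Fin (n+1))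
            (Matrix.det (Matrix.of fun (i j : Fin n) => (X j : MvPolynomial (Fin n) ℤ) ^ ρ i))
          = Matrix.det (Matrix.of fun (i j : Fin n) =>
              (X j.castSucc : MvPolynomial (Fin (n+1)) ℤ) ^ ρ i) := by
      intro ρ
      rw [AlgHom.map_det]
      congr 1
      exact Matrix.ext fun i j => by
        simp only [AlgHom.mapMatrix_apply, Matrix.map_apply, Matrix.of_apply, map_pow, rename_X]
    have hanti : ∀ ρ ∈ Fintype.piFinset ranges, StrictAnti ρ := by
      intro ρ hρ a b hab
      have ha := (Fintype.mem_piFinset.mp hρ) a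
      have hb := (Fintype.mem_piFinset.mp hρ) b
      rw [hranges, Finset.mem_Ico] at ha hb
      have h1 : κ b.castSucc ≤ κ a.succ := hκ.antitone (by
        rw [Fin.le_def]
        simp only [Fin.lt_def] at hab
        simp only [Fin.coe_castSucc, Fin.val_succ]
        omega)
      omega
    have ihS : ∀ ρ : Fin n → ℕ, ∃ Sp : MvPolynomial (Fin n) ℤ,
        StrictAnti ρ → (Sp ≠ 0 ∧ (∀ d, 0 ≤ Sp.coeff d) ∧
          (Matrix.of fun (i j : Fin n) => (X j : MvPolynomial (Fin n) ℤ) ^ ρ i).det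
            = (∏ i : Fin n, ∏ j ∈ Finset.Ioi i,
                ((X i : MvPolynomial (Fin n) ℤ) - X j)) * Sp) := by
      intro ρ
      by_cases h : StrictAnti ρ
      · obtain ⟨Sp, hSp⟩ := ih ρ h
        exact ⟨Sp, fun _ => hSp⟩
      · exact ⟨0, fun h' => absurd h' h⟩
    choose Sf hSf using ihS
    set V' : MvPolynomial (Fin (n+1)) ℤ :=
      ∏ i : Fin n, ∏ j ∈ Finset.Ioi i,
        ((X i.castSucc : MvPolynomial (Fin (n+1)) ℤ) - X j.castSucc) with hV'
    have hrenV : rename (Fin.castSucc : Fin n → Fin (n+1))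
        (∏ i : Fin n, ∏ j ∈ Finset.Ioi i, ((X i : MvPolynomial (Fin n) ℤ) - X j)) = V' := by
      rw [map_prod]
      refine Finset.prod_congr rfl fun i _ => ?_
      rw [map_prod]
      refine Finset.prod_congr rfl fun j _ => ?_
      rw [map_sub, rename_X, rename_X]
    set S : MvPolynomial (Fin (n+1)) ℤ :=
      (X L : MvPolynomial (Fin (n+1)) ℤ) ^ κ L * ∑ ρ ∈ Fintype.piFinset ranges,
        (∏ i : Fin n, (X L : MvPolynomial (Fin (n+1)) ℤ) ^ (κ i.castSucc - 1 - ρ i)) *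
          rename Fin.castSucc (Sf ρ) with hS
    -- determinant computation
    have hdetfinal : A.det = (V' * ∏ j : Fin n,
        ((X j.castSucc : MvPolynomial (Fin (n+1)) ℤ) - X L)) * S := by
      rw [← hdetB, hdetBC, hdetCD, hdetD, Finset.sum_congr rfl (fun ρ hρ => by
        rw [hterm ρ, ← hrename ρ, (hSf ρ (hanti ρ hρ)).2.2, map_mul, hrenV])]
      rw [hS]
      rw [Finset.sum_congr rfl (fun ρ _ => by ring :
        ∀ ρ ∈ Fintype.piFinset ranges, (∏ i : Fin n,
            (X L : MvPolynomial (Fin (n+1)) ℤ) ^ (κ i.castSucc - 1 - ρ i)) *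
            (V' * rename Fin.castSucc (Sf ρ)) =
          V' * ((∏ i : Fin n, (X L : MvPolynomial (Fin (n+1)) ℤ) ^ (κ i.castSucc - 1 - ρ i)) *
            rename Fin.castSucc (Sf ρ))), ← Finset.mul_sum]
      ring
    -- the Vandermonde splits
    have hvand : (∏ i : Fin (n+1), ∏ j ∈ Finset.Ioi i,
        ((X i : MvPolynomial (Fin (n+1)) ℤ) - X j)) =
        V' * ∏ j : Fin n, ((X j.castSucc : MvPolynomial (Fin (n+1)) ℤ) - X L) := by
      exact my_Ioi_split (fun i j => (X i : MvPolynomial (Fin (n+1)) ℤ) - X j)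
    -- membership of the minimal choice
    have hmem : (fun i : Fin n => κ i.succ) ∈ Fintype.piFinset ranges := by
      rw [Fintype.mem_piFinset]
      intro i
      rw [hranges, Finset.mem_Ico]
      exact ⟨le_refl _, hκ (Fin.castSucc_lt_succ (i := i))⟩
    -- nonnegativity of S
    have hSnonneg : ∀ d, 0 ≤ S.coeff d := by
      rw [hS]
      refine my_nonneg_mul (my_nonneg_X_pow _ _) (my_nonneg_sum _ _ fun ρ hρ => ?_)
      refine my_nonneg_mul (my_nonneg_prod _ _ fun i _ => my_nonneg_X_pow _ _) ?_
      exact my_nonneg_rename _ (Fin.castSucc_injective n) (hSf ρ (hanti ρ hρ)).2.1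
    -- S is nonzero
    have hSne : S ≠ 0 := by
      rw [hS]
      refine mul_ne_zero (pow_ne_zero _ (MvPolynomial.X_ne_zero _)) ?_
      refine my_sum_ne_zero _ _ (fun ρ hρ => ?_) hmem ?_
      · refine my_nonneg_mul (my_nonneg_prod _ _ fun i _ => my_nonneg_X_pow _ _) ?_
        exact my_nonneg_rename _ (Fin.castSucc_injective n) (hSf ρ (hanti ρ hρ)).2.1
      · refine mul_ne_zero (Finset.prod_ne_zero_iff.mpr fun i _ =>
          pow_ne_zero _ (MvPolynomial.X_ne_zero _)) ?_
        intro h0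
        exact (hSf _ (hanti _ hmem)).1
          (MvPolynomial.rename_injective _ (Fin.castSucc_injective n)
            (h0.trans (map_zero _).symm))
    exact ⟨S, hSne, hSnonneg, by rw [hdetfinal, hvand] ⟩

/-- for a weakly decreasing sequence `λ_0 ≥ λ_1 ≥ … ≥ λ_{v-1} ≥ 0`,
the determinant of the `v × v` matrix with `(i,j)` entry `X_j^{λ_i + v - 1 - i}`
factors as the Vandermonde determinant `∏_{i < j} (X_i - X_j)` times a nonzero
polynomial `S ∈ ℤ[X_0,…,X_{v-1}]` with nonnegative coefficients (the Schur
polynomial `S_λ`). -/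
theorem det_eq_vandermonde_mul_schur
    (v : ℕ) (hv : 0 < v)
    (lam : Fin v → ℕ) (hlam : Antitone lam)
    (M : Matrix (Fin v) (Fin v) (MvPolynomial (Fin v) ℤ))
    (hM : ∀ i j : Fin v, M i j = (X j : MvPolynomial (Fin v) ℤ) ^
      (lam i + (v - 1 - (i : ℕ)))) :
    ∃ S : MvPolynomial (Fin v) ℤ, S ≠ 0 ∧ (∀ d, 0 ≤ S.coeff d) ∧
      M.det = (∏ i : Fin v, ∏ j ∈ Finset.Ioi i,
        ((X i : MvPolynomial (Fin v) ℤ) - X j)) * S := by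
  have hκ : StrictAnti (fun i : Fin v => lam i + (v - 1 - (i : ℕ))) := by
    intro a b hab
    have h1 : lam b ≤ lam a := hlam hab.le
    have ha := a.isLt
    have hb := b.isLt
    have hab' : (a : ℕ) < (b : ℕ) := hab
    simp only
    omega
  obtain ⟨S, h1, h2, h3⟩ := schur_key v _ hκ
  refine ⟨S, h1, h2, ?_⟩
  have hMeq : M = Matrix.of fun (i j : Fin v) =>
      (X j : MvPolynomial (Fin v) ℤ) ^ (lam i + (v - 1 - (i : ℕ))) :=
    Matrix.ext fun i j => hM i j
  rw [hMeq, h3]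
end
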